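/- arXiv:1405.4569 — 5 statements merged into one kernel-verified Lean document; each statement's English description precedes it below -/
import Mathlib

section
/- Existence, explicit form, and exponential decay of the topologically protected zero mode of the 1D Dirac operator. Let λ, θ be nonzero real numbers and let κ : ℝ → ℝ be continuous and bounded, with nonzero constants κ_{+∞}, κ_{−∞} satisfying κ_{+∞}·κ_{−∞} > 0, such that X ↦ κ(X) − κ_{+∞} is integrable on [0, ∞) and X ↦ κ(X) + κ_{−∞} is integrable on (−∞, 0]. Define α⋆ : ℝ → ℂ² by α⋆(X) = (1, i)ᵀ exp(−(θ/λ) ∫₀^X κ(s) ds) if θκ_{+∞}/λ > 0, and α⋆(X) = (1, −i)ᵀ exp((θ/λ) ∫₀^X κ(s) ds) if θκ_{+∞}/λ < 0. Then α⋆ is continuously differentiable, satisfies iλσ₃α⋆′(X) + θκ(X)σ₁α⋆(X) = 0 for all X ∈ ℝ, and there exist constants C, c > 0 such that |α⋆(X)|_{ℂ²} ≤ C e^{−c|X|} for all X ∈ ℝ; in particular α⋆ ∈ L²(ℝ, ℂ²) and α⋆(X) → 0 as X → ±∞. -/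
open MeasureTheory Filter Set Topology Interval

/-!
With `α₂ = ι α₁`, `ι = ±i`, the system `𝒟α = 0` collapses to the scalar equation
`α₁' = ε κ α₁`, `ε = ∓θ/λ`, solved by `exp (ε ∫₀^X κ)`; the sign is the one making
`ε κ_{+∞} < 0`, hence also `ε κ_{-∞} < 0`. Integrability of `κ ∓ κ_{±∞}` on the half-lines
gives `∫₀^X κ = κ_{+∞} X + O(1)` as `X → +∞` and `∫₀^X κ = -κ_{-∞} X + O(1)` as `X → -∞`,
so the exponent is at most `A - c |X|` with `c = min (-ε κ_{+∞}) (-ε κ_{-∞}) > 0`.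
-/

section ExponentialDecay

lemma integrable_exp_neg_mul_abs {c : ℝ} (hc : 0 < c) :
    Integrable (fun x : ℝ => Real.exp (-c * |x|)) := by
  rw [← integrableOn_univ, ← Iic_union_Ioi (a := (0 : ℝ)), integrableOn_union]
  constructor
  · refine (integrableOn_exp_mul_Iic hc 0).congr_fun (fun x hx => ?_) measurableSet_Iic
    rw [abs_of_nonpos hx, neg_mul_neg]
  · refine (integrableOn_exp_mul_Ioi (neg_neg_of_pos hc) 0).congr_fun
      (fun x hx => ?_) measurableSet_Ioi
    rw [abs_of_pos hx]

variable {E : Type*} [NormedAddCommGroup E] {f : ℝ → E} {C c : ℝ}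

lemma memLp_of_norm_le_exp_neg_mul_abs {p : ENNReal} (hp0 : p ≠ 0) (hp : p ≠ ⊤)
    (hf : AEStronglyMeasurable f) (hc : 0 < c)
    (hbound : ∀ x, ‖f x‖ ≤ C * Real.exp (-c * |x|)) : MemLp f p := by
  have hexp : MemLp (fun x : ℝ => Real.exp (-c * |x|)) p := by
    refine (integrable_norm_rpow_iff (by fun_prop) hp0 hp).mp ?_
    refine (integrable_exp_neg_mul_abs (mul_pos hc (ENNReal.toReal_pos hp0 hp))).congr
      (Eventually.of_forall fun x => ?_)
    dsimp only
    rw [Real.norm_of_nonneg (Real.exp_pos _).le, ← Real.exp_mul]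
    ring_nf
  refine (hexp.const_mul C).of_le hf (Eventually.of_forall fun x => (hbound x).trans ?_)
  rw [norm_mul, Real.norm_of_nonneg (Real.exp_pos _).le, Real.norm_eq_abs]
  exact mul_le_mul_of_nonneg_right (le_abs_self C) (Real.exp_pos _).le

lemma tendsto_cocompact_of_norm_le_exp_neg_mul_abs (hc : 0 < c)
    (hbound : ∀ x, ‖f x‖ ≤ C * Real.exp (-c * |x|)) : Tendsto f (cocompact ℝ) (𝓝 0) := by
  refine squeeze_zero_norm hbound ?_
  have hlin : Tendsto (fun x : ℝ => -c * ‖x‖) (cocompact ℝ) atBot :=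
    (tendsto_const_mul_atBot_of_neg (neg_neg_of_pos hc)).mpr tendsto_norm_cocompact_atTop
  simpa using (Real.tendsto_exp_atBot.comp hlin).const_mul C

end ExponentialDecay

lemma abs_intervalIntegral_sub_mul_le {g : ℝ → ℝ} {s : Set ℝ} {p X : ℝ}
    (hg : IntegrableOn (fun x => g x - p) s) (hs : uIcc 0 X ⊆ s) :
    |(∫ x in (0 : ℝ)..X, g x) - p * X| ≤ ∫ x in s, |g x - p| := by
  have hgX : IntervalIntegrable (fun x => g x - p) volume 0 X := (hg.mono_set hs).intervalIntegrable
  have hsplit : (∫ x in (0 : ℝ)..X, g x) - p * X = ∫ x in (0 : ℝ)..X, (g x - p) := by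
    have hgi : IntervalIntegrable g volume 0 X := by
      simpa using hgX.add (intervalIntegrable_const (c := p))
    rw [intervalIntegral.integral_sub hgi intervalIntegrable_const]
    simp [mul_comm]
  rw [hsplit, intervalIntegral.abs_integral_eq_abs_integral_uIoc]
  calc |∫ x in Ι 0 X, (g x - p)| ≤ ∫ x in Ι 0 X, |g x - p| := abs_integral_le_integral_abs
    _ ≤ ∫ x in s, |g x - p| :=
      setIntegral_mono_set hg.abs (Eventually.of_forall fun _ => abs_nonneg _)
        (uIoc_subset_uIcc.trans hs).eventuallyLE

lemma exists_intervalIntegral_le_sub_mul_abs {g : ℝ → ℝ} {p q : ℝ} (hp : p < 0) (hq : q < 0)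
    (hgp : IntegrableOn (fun x => g x - p) (Ici 0))
    (hgq : IntegrableOn (fun x => g x + q) (Iic 0)) :
    ∃ A, ∃ c > 0, ∀ X, ∫ x in (0 : ℝ)..X, g x ≤ A - c * |X| := by
  set Bp := ∫ x in Ici 0, |g x - p|
  set Bq := ∫ x in Iic 0, |g x + q|
  have hBp : 0 ≤ Bp := integral_nonneg fun _ => abs_nonneg _
  have hBq : 0 ≤ Bq := integral_nonneg fun _ => abs_nonneg _
  refine ⟨Bp + Bq, min (-p) (-q), lt_min (neg_pos.mpr hp) (neg_pos.mpr hq), fun X => ?_⟩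
  rcases le_total 0 X with hX | hX
  · have h := abs_intervalIntegral_sub_mul_le hgp
      (by rw [uIcc_of_le hX]; exact Icc_subset_Ici_self)
    rw [abs_of_nonneg hX]
    nlinarith [(abs_le.mp h).2, min_le_left (-p) (-q)]
  · have h := abs_intervalIntegral_sub_mul_le (p := -q)
      (by simpa only [sub_neg_eq_add] using hgq) (by rw [uIcc_of_ge hX]; exact Icc_subset_Iic_self)
    simp only [sub_neg_eq_add] at h
    rw [abs_of_nonpos hX]
    nlinarith [(abs_le.mp h).2, min_le_right (-p) (-q)]

section DiracZeroMode

variable {κ : ℝ → ℝ} {ε : ℝ}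

lemma contDiff_one_intervalIntegral (hκ : Continuous κ) (a : ℝ) :
    ContDiff ℝ 1 (fun X => ∫ s in a..X, κ s) := by
  have hderiv (X : ℝ) : HasDerivAt (fun X => ∫ s in a..X, κ s) (κ X) X :=
    (hκ.integral_hasStrictDerivAt a X).hasDerivAt
  rw [contDiff_one_iff_deriv, funext fun X => (hderiv X).deriv]
  exact ⟨fun X => (hderiv X).differentiableAt, hκ⟩

noncomputable def zeroModeProfile (κ : ℝ → ℝ) (ε X : ℝ) : ℂ :=
  Real.exp (ε * ∫ s in (0 : ℝ)..X, κ s)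

lemma hasDerivAt_zeroModeProfile (hκ : Continuous κ) (X : ℝ) :
    HasDerivAt (zeroModeProfile κ ε) ((ε * κ X : ℝ) * zeroModeProfile κ ε X) X := by
  refine (((hκ.integral_hasStrictDerivAt 0 X).hasDerivAt.const_mul ε).exp).ofReal_comp
    |>.congr_deriv ?_
  rw [zeroModeProfile, Complex.ofReal_mul, mul_comm]

lemma contDiff_zeroModeProfile (hκ : Continuous κ) : ContDiff ℝ 1 (zeroModeProfile κ ε) :=
  Complex.ofRealCLM.contDiff.comp
    (Real.contDiff_exp.comp (contDiff_const.mul (contDiff_one_intervalIntegral hκ 0)))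

lemma exists_norm_zeroModeProfile_le {κp κm : ℝ} (hεp : ε * κp < 0) (hεm : ε * κm < 0)
    (hintp : IntegrableOn (fun X => κ X - κp) (Ici 0))
    (hintm : IntegrableOn (fun X => κ X + κm) (Iic 0)) :
    ∃ C > 0, ∃ c > 0, ∀ X, ‖zeroModeProfile κ ε X‖ ≤ C * Real.exp (-c * |X|) := by
  obtain ⟨A, c, hc, hA⟩ := exists_intervalIntegral_le_sub_mul_abs (g := fun X => ε * κ X) hεp hεm
    (by simpa only [IntegrableOn, mul_sub] using hintp.const_mul ε)
    (by simpa only [IntegrableOn, mul_add] using hintm.const_mul ε)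
  refine ⟨Real.exp A, Real.exp_pos A, c, hc, fun X => ?_⟩
  rw [zeroModeProfile, Complex.norm_real, Real.norm_of_nonneg (Real.exp_pos _).le, ← Real.exp_add,
    ← intervalIntegral.integral_const_mul]
  exact Real.exp_le_exp.mpr (by linarith [hA X])

theorem dirac_zero_mode_of_zeroModeProfile {lam θ κp κm : ℝ} {ι : ℂ} {α₁ α₂ : ℝ → ℂ}
    (hκc : Continuous κ) (hsign : 0 < κp * κm)
    (hintp : IntegrableOn (fun X => κ X - κp) (Ici 0))
    (hintm : IntegrableOn (fun X => κ X + κm) (Iic 0))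
    (hι : ι ^ 2 = -1) (hει : Complex.I * lam * ε + θ * ι = 0) (hεp : ε * κp < 0)
    (hα₁ : ∀ X, α₁ X = zeroModeProfile κ ε X) (hα₂ : ∀ X, α₂ X = ι * α₁ X) :
    ContDiff ℝ 1 α₁ ∧ ContDiff ℝ 1 α₂ ∧
    (∀ X : ℝ, Complex.I * (lam : ℂ) * deriv α₁ X + (θ : ℂ) * (κ X : ℂ) * α₂ X = 0) ∧
    (∀ X : ℝ, -(Complex.I * (lam : ℂ)) * deriv α₂ X + (θ : ℂ) * (κ X : ℂ) * α₁ X = 0) ∧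
    (∃ C > (0:ℝ), ∃ c > (0:ℝ), ∀ X : ℝ,
      ‖α₁ X‖ ≤ C * Real.exp (-c * |X|) ∧ ‖α₂ X‖ ≤ C * Real.exp (-c * |X|)) ∧
    MemLp α₁ 2 (volume : Measure ℝ) ∧ MemLp α₂ 2 (volume : Measure ℝ) ∧
    Tendsto α₁ atTop (nhds 0) ∧ Tendsto α₁ atBot (nhds 0) ∧
    Tendsto α₂ atTop (nhds 0) ∧ Tendsto α₂ atBot (nhds 0) := by
  obtain rfl : α₁ = zeroModeProfile κ ε := funext hα₁
  obtain rfl : α₂ = fun X => ι * zeroModeProfile κ ε X := funext hα₂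
  have hεm : ε * κm < 0 := by
    by_contra! h
    nlinarith [mul_neg_of_neg_of_pos hεp hsign, mul_nonneg h (sq_nonneg κp)]
  obtain ⟨C, hC, c, hc, hnorm₁⟩ := exists_norm_zeroModeProfile_le hεp hεm hintp hintm
  have hnorm₂ (X : ℝ) : ‖ι * zeroModeProfile κ ε X‖ ≤ C * Real.exp (-c * |X|) := by
    have hι1 : ‖ι‖ = 1 := by
      simpa [norm_pow, pow_eq_one_iff_of_nonneg (norm_nonneg ι) two_ne_zero] using congrArg norm hι
    rw [norm_mul, hι1, one_mul]
    exact hnorm₁ X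
  have hdiff₁ : ContDiff ℝ 1 (zeroModeProfile κ ε) := contDiff_zeroModeProfile hκc
  have hdiff₂ : ContDiff ℝ 1 fun X => ι * zeroModeProfile κ ε X := contDiff_const.mul hdiff₁
  have hlim₁ := tendsto_cocompact_of_norm_le_exp_neg_mul_abs hc hnorm₁
  have hlim₂ := tendsto_cocompact_of_norm_le_exp_neg_mul_abs hc hnorm₂
  refine ⟨hdiff₁, hdiff₂, fun X => ?_, fun X => ?_, ⟨C, hC, c, hc, fun X => ⟨hnorm₁ X, hnorm₂ X⟩⟩,
    memLp_of_norm_le_exp_neg_mul_abs two_ne_zero ENNReal.ofNat_ne_top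
      hdiff₁.continuous.aestronglyMeasurable hc hnorm₁,
    memLp_of_norm_le_exp_neg_mul_abs two_ne_zero ENNReal.ofNat_ne_top
      hdiff₂.continuous.aestronglyMeasurable hc hnorm₂,
    hlim₁.mono_left atTop_le_cocompact, hlim₁.mono_left atBot_le_cocompact,
    hlim₂.mono_left atTop_le_cocompact, hlim₂.mono_left atBot_le_cocompact⟩
  · rw [(hasDerivAt_zeroModeProfile hκc X).deriv, Complex.ofReal_mul]
    linear_combination (κ X : ℂ) * zeroModeProfile κ ε X * hει
  · -- multiplying the first relation by `ι` and using `ι ^ 2 = -1`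
    rw [((hasDerivAt_zeroModeProfile hκc X).const_mul ι).deriv, Complex.ofReal_mul]
    linear_combination (κ X : ℂ) * zeroModeProfile κ ε X * (θ * hι - ι * hει)

end DiracZeroMode

theorem dirac_zero_mode_existence_general
    (lam θ : ℝ) (hlam : lam ≠ 0) (hθ : θ ≠ 0)
    (κ : ℝ → ℝ) (hκc : Continuous κ)
    (κp κm : ℝ) (hκp : κp ≠ 0) (hsign : 0 < κp * κm)
    (hintp : IntegrableOn (fun X => κ X - κp) (Set.Ici (0 : ℝ)))
    (hintm : IntegrableOn (fun X => κ X + κm) (Set.Iic (0 : ℝ)))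
    (α₁ α₂ : ℝ → ℂ)
    (hα₁ : ∀ X : ℝ, α₁ X = if 0 < θ * κp / lam
        then ((Real.exp (-(θ / lam) * ∫ s in (0:ℝ)..X, κ s) : ℝ) : ℂ)
        else ((Real.exp ((θ / lam) * ∫ s in (0:ℝ)..X, κ s) : ℝ) : ℂ))
    (hα₂ : ∀ X : ℝ, α₂ X = if 0 < θ * κp / lam
        then Complex.I * α₁ X else -Complex.I * α₁ X) :
    ContDiff ℝ 1 α₁ ∧ ContDiff ℝ 1 α₂ ∧
    (∀ X : ℝ, Complex.I * (lam : ℂ) * deriv α₁ X + (θ : ℂ) * (κ X : ℂ) * α₂ X = 0) ∧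
    (∀ X : ℝ, -(Complex.I * (lam : ℂ)) * deriv α₂ X + (θ : ℂ) * (κ X : ℂ) * α₁ X = 0) ∧
    (∃ C > (0:ℝ), ∃ c > (0:ℝ), ∀ X : ℝ,
      ‖α₁ X‖ ≤ C * Real.exp (-c * |X|) ∧ ‖α₂ X‖ ≤ C * Real.exp (-c * |X|)) ∧
    MemLp α₁ 2 (volume : Measure ℝ) ∧ MemLp α₂ 2 (volume : Measure ℝ) ∧
    Tendsto α₁ atTop (nhds 0) ∧ Tendsto α₁ atBot (nhds 0) ∧
    Tendsto α₂ atTop (nhds 0) ∧ Tendsto α₂ atBot (nhds 0) := by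
  have hlamc : (lam : ℂ) ≠ 0 := mod_cast hlam
  by_cases h : 0 < θ * κp / lam
  · simp only [h, if_true] at hα₁ hα₂
    refine dirac_zero_mode_of_zeroModeProfile hκc hsign hintp hintm Complex.I_sq ?_ ?_ hα₁ hα₂
    · push_cast
      field_simp
      ring
    · rw [neg_mul, div_mul_eq_mul_div]
      exact neg_neg_of_pos h
  · simp only [h, if_false] at hα₁ hα₂
    have hneg : θ * κp / lam < 0 :=
      lt_of_le_of_ne (not_lt.mp h) (div_ne_zero (mul_ne_zero hθ hκp) hlam)
    refine dirac_zero_mode_of_zeroModeProfile hκc hsign hintp hintm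
      (by rw [neg_sq, Complex.I_sq]) ?_ ?_ hα₁ hα₂
    · push_cast
      field_simp
      ring
    · rwa [div_mul_eq_mul_div]

/-- Existence, explicit form, and exponential decay of the topologically protected
zero mode of the 1D Dirac operator. -/
theorem dirac_zero_mode_existence
    (lam θ : ℝ) (hlam : lam ≠ 0) (hθ : θ ≠ 0)
    (κ : ℝ → ℝ) (hκc : Continuous κ) (hκb : ∃ M : ℝ, ∀ X, |κ X| ≤ M)
    (κp κm : ℝ) (hκp : κp ≠ 0) (hκm : κm ≠ 0) (hsign : 0 < κp * κm)
    (hintp : IntegrableOn (fun X => κ X - κp) (Set.Ici (0 : ℝ)))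
    (hintm : IntegrableOn (fun X => κ X + κm) (Set.Iic (0 : ℝ)))
    (α₁ α₂ : ℝ → ℂ)
    (hα₁ : ∀ X : ℝ, α₁ X = if 0 < θ * κp / lam
        then ((Real.exp (-(θ / lam) * ∫ s in (0:ℝ)..X, κ s) : ℝ) : ℂ)
        else ((Real.exp ((θ / lam) * ∫ s in (0:ℝ)..X, κ s) : ℝ) : ℂ))
    (hα₂ : ∀ X : ℝ, α₂ X = if 0 < θ * κp / lam
        then Complex.I * α₁ X else -Complex.I * α₁ X) :
    ContDiff ℝ 1 α₁ ∧ ContDiff ℝ 1 α₂ ∧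
    (∀ X : ℝ, Complex.I * (lam : ℂ) * deriv α₁ X + (θ : ℂ) * (κ X : ℂ) * α₂ X = 0) ∧
    (∀ X : ℝ, -(Complex.I * (lam : ℂ)) * deriv α₂ X + (θ : ℂ) * (κ X : ℂ) * α₁ X = 0) ∧
    (∃ C > (0:ℝ), ∃ c > (0:ℝ), ∀ X : ℝ,
      ‖α₁ X‖ ≤ C * Real.exp (-c * |X|) ∧ ‖α₂ X‖ ≤ C * Real.exp (-c * |X|)) ∧
    MemLp α₁ 2 (volume : Measure ℝ) ∧ MemLp α₂ 2 (volume : Measure ℝ) ∧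
    Tendsto α₁ atTop (nhds 0) ∧ Tendsto α₁ atBot (nhds 0) ∧
    Tendsto α₂ atTop (nhds 0) ∧ Tendsto α₂ atBot (nhds 0) :=
  dirac_zero_mode_existence_general lam θ hlam hθ κ hκc κp κm hκp hsign hintp hintm α₁ α₂ hα₁ hα₂
end

section
/- Simplicity of the zero mode of the 1D Dirac operator. Let λ, θ be nonzero real numbers and let κ : ℝ → ℝ be continuous and bounded, with nonzero constants κ_{+∞}, κ_{−∞} satisfying κ_{+∞}·κ_{−∞} > 0, such that X ↦ κ(X) − κ_{+∞} is integrable on [0, ∞) and X ↦ κ(X) + κ_{−∞} is integrable on (−∞, 0]. Let α⋆(X) := (1, i)ᵀ exp(−(θ/λ) ∫₀^X κ(s) ds) if θκ_{+∞}/λ > 0 and α⋆(X) := (1, −i)ᵀ exp((θ/λ) ∫₀^X κ(s) ds) if θκ_{+∞}/λ < 0. Then every continuously differentiable α : ℝ → ℂ² satisfying iλσ₃α′(X) + θκ(X)σ₁α(X) = 0 for all X and α(X) → 0 as X → ±∞ is a complex scalar multiple of α⋆. -/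
/-!
Writing `w_σ = β₁ + σ i β₂` with `σ = ±1` decouples the Dirac system into the scalar equations
`w_σ' = σ (θ/λ) κ w_σ`, so `w_σ(X) = w_σ(0) exp(σ (θ/λ) ∫₀^X κ)`. Because `κ - κ₊` is integrable
on `[0, ∞)`, `∫₀^X κ = κ₊ X + O(1)`; for the sign `σ` with `σ θ κ₊ / λ ≥ 0` the exponent is
bounded below, so `w_σ → 0` at `+∞` forces `w_σ = 0`, and the other mode `w_{-σ}` is a multiple of `α⋆`.
-/

open MeasureTheory Filter Complex Set Topology

theorem eq_mul_cexp_sub_of_hasDerivAt {A a w : ℝ → ℂ} (hA : ∀ x, HasDerivAt A (a x) x)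
    (hw : ∀ x, HasDerivAt w (a x * w x) x) (x : ℝ) : w x = w 0 * cexp (A x - A 0) := by
  have hderiv : ∀ y, HasDerivAt (fun y => w y * cexp (-A y)) 0 y := fun y =>
    ((hw y).mul (hA y).neg.cexp).congr_deriv (by ring)
  have hconst := is_const_of_deriv_eq_zero (fun y => (hderiv y).differentiableAt)
    (fun y => (hderiv y).deriv) x 0
  calc w x = w x * cexp (-A x) * cexp (A x) := by rw [mul_assoc, ← Complex.exp_add]; simp
    _ = w 0 * cexp (A x - A 0) := by
      rw [hconst, mul_assoc, ← Complex.exp_add, neg_add_eq_sub]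

theorem eq_zero_of_tendsto_of_eq_mul_exp {l : Filter ℝ} [l.NeBot] {w : ℝ → ℂ} {g : ℝ → ℝ}
    (hw : ∀ x, w x = w 0 * Real.exp (g x)) (hg : IsBoundedUnder (· ≥ ·) l g)
    (hlim : Tendsto w l (𝓝 0)) : w 0 = 0 := by
  obtain ⟨B, hB⟩ := hg
  have hlower : ∀ᶠ x in l, ‖w 0‖ * Real.exp B ≤ ‖w x‖ := by
    filter_upwards [eventually_map.1 hB] with x hx
    rw [hw x, norm_mul, Complex.norm_real, Real.norm_of_nonneg (Real.exp_pos _).le]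
    gcongr
  have := ge_of_tendsto (by simpa using hlim.norm) hlower
  exact norm_le_zero_iff.1 (nonpos_of_mul_nonpos_left this (Real.exp_pos B))

theorem abs_intervalIntegral_sub_mul_le_s4 {f : ℝ → ℝ} {c : ℝ}
    (hf : IntegrableOn (fun x => f x - c) (Ici 0)) {x : ℝ} (hx : 0 ≤ x) :
    |(∫ s in (0 : ℝ)..x, f s) - c * x| ≤ ∫ s in Ici 0, |f s - c| := by
  have hfc : IntervalIntegrable (fun s => f s - c) volume 0 x :=
    (intervalIntegrable_iff_integrableOn_Icc_of_le hx).2 (hf.mono_set Icc_subset_Ici_self)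
  have hsplit : (∫ s in (0 : ℝ)..x, f s) - c * x = ∫ s in (0 : ℝ)..x, (f s - c) := by
    rw [intervalIntegral.integral_sub
      (by simpa using hfc.add (intervalIntegrable_const (c := c))) intervalIntegrable_const]
    simp [mul_comm]
  calc |(∫ s in (0 : ℝ)..x, f s) - c * x| ≤ ∫ s in (0 : ℝ)..x, |f s - c| := by
        rw [hsplit]; exact intervalIntegral.abs_integral_le_integral_abs hx
    _ ≤ ∫ s in Ici 0, |f s - c| := by
        rw [intervalIntegral.integral_of_le hx]
        exact setIntegral_mono_set hf.abs (Eventually.of_forall fun _ => abs_nonneg _)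
          (Eventually.of_forall (Ioc_subset_Icc_self.trans Icc_subset_Ici_self))

theorem isBoundedUnder_ge_mul_intervalIntegral {f : ℝ → ℝ} {c ν : ℝ}
    (hf : IntegrableOn (fun x => f x - c) (Ici 0)) (hν : 0 ≤ ν * c) :
    IsBoundedUnder (· ≥ ·) atTop (fun x => ν * ∫ s in (0 : ℝ)..x, f s) := by
  refine ⟨-(|ν| * ∫ s in Ici 0, |f s - c|), eventually_map.2 ?_⟩
  filter_upwards [eventually_ge_atTop 0] with x hx
  have hdev : -(|ν| * ∫ s in Ici 0, |f s - c|) ≤ ν * ((∫ s in (0 : ℝ)..x, f s) - c * x) :=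
    calc -(|ν| * ∫ s in Ici 0, |f s - c|) ≤ -(|ν| * |(∫ s in (0 : ℝ)..x, f s) - c * x|) := by
          gcongr; exact abs_intervalIntegral_sub_mul_le_s4 hf hx
      _ ≤ _ := by rw [← abs_mul]; exact neg_abs_le _
  nlinarith [mul_nonneg hν hx]

theorem hasDerivAt_dirac_mode {lam θ σ : ℝ} {κ : ℝ → ℝ} {β₁ β₂ : ℝ → ℂ} (hlam : lam ≠ 0)
    (hσ : σ ^ 2 = 1) (hβ₁ : Differentiable ℝ β₁) (hβ₂ : Differentiable ℝ β₂)
    (h₁ : ∀ X, I * lam * deriv β₁ X + θ * κ X * β₂ X = 0)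
    (h₂ : ∀ X, -(I * lam) * deriv β₂ X + θ * κ X * β₁ X = 0) (X : ℝ) :
    HasDerivAt (fun Y => β₁ Y + σ * I * β₂ Y)
      (σ * (θ / lam) * κ X * (β₁ X + σ * I * β₂ X)) X := by
  refine ((hβ₁ X).hasDerivAt.add ((hβ₂ X).hasDerivAt.const_mul _)).congr_deriv ?_
  have hlamC : (lam : ℂ) ≠ 0 := by exact_mod_cast hlam
  have hσC : (σ : ℂ) ^ 2 = 1 := by exact_mod_cast hσ
  field_simp
  linear_combination (-I) * h₁ X - σ * h₂ X + lam * deriv β₁ X * I_sq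
    - I * θ * κ X * β₂ X * hσC

theorem dirac_mode_eq {lam θ σ : ℝ} {κ : ℝ → ℝ} {β₁ β₂ : ℝ → ℂ} (hlam : lam ≠ 0)
    (hκ : Continuous κ) (hσ : σ ^ 2 = 1) (hβ₁ : Differentiable ℝ β₁) (hβ₂ : Differentiable ℝ β₂)
    (h₁ : ∀ X, I * lam * deriv β₁ X + θ * κ X * β₂ X = 0)
    (h₂ : ∀ X, -(I * lam) * deriv β₂ X + θ * κ X * β₁ X = 0) (X : ℝ) :
    β₁ X + σ * I * β₂ X =
      (β₁ 0 + σ * I * β₂ 0) * Real.exp (σ * (θ / lam) * ∫ s in (0 : ℝ)..X, κ s) := by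
  have hA : ∀ Y, HasDerivAt (fun Y => ((σ * (θ / lam) * ∫ s in (0 : ℝ)..Y, κ s : ℝ) : ℂ))
      (σ * (θ / lam) * κ Y) Y := fun Y => by
    simpa using (((hκ.integral_hasStrictDerivAt 0 Y).hasDerivAt.const_mul
      (σ * (θ / lam))).ofReal_comp)
  simpa using eq_mul_cexp_sub_of_hasDerivAt hA
    (hasDerivAt_dirac_mode hlam hσ hβ₁ hβ₂ h₁ h₂) X

theorem dirac_zero_mode_simplicity_general
    (lam θ : ℝ) (hlam : lam ≠ 0)
    (κ : ℝ → ℝ) (hκc : Continuous κ)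
    (κp : ℝ)
    (hintp : IntegrableOn (fun X => κ X - κp) (Set.Ici (0 : ℝ)))
    (α₁ α₂ : ℝ → ℂ)
    (hα₁ : ∀ X : ℝ, α₁ X = if 0 < θ * κp / lam
        then ((Real.exp (-(θ / lam) * ∫ s in (0:ℝ)..X, κ s) : ℝ) : ℂ)
        else ((Real.exp ((θ / lam) * ∫ s in (0:ℝ)..X, κ s) : ℝ) : ℂ))
    (hα₂ : ∀ X : ℝ, α₂ X = if 0 < θ * κp / lam
        then Complex.I * α₁ X else -Complex.I * α₁ X) :
    ∀ β₁ β₂ : ℝ → ℂ, ContDiff ℝ 1 β₁ → ContDiff ℝ 1 β₂ →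
      (∀ X : ℝ, Complex.I * (lam : ℂ) * deriv β₁ X + (θ : ℂ) * (κ X : ℂ) * β₂ X = 0) →
      (∀ X : ℝ, -(Complex.I * (lam : ℂ)) * deriv β₂ X + (θ : ℂ) * (κ X : ℂ) * β₁ X = 0) →
      Tendsto β₁ atTop (nhds 0) → Tendsto β₁ atBot (nhds 0) →
      Tendsto β₂ atTop (nhds 0) → Tendsto β₂ atBot (nhds 0) →
      ∃ c : ℂ, ∀ X : ℝ, β₁ X = c * α₁ X ∧ β₂ X = c * α₂ X := by
  intro β₁ β₂ hβ₁ hβ₂ h₁ h₂ hβ₁top _ hβ₂top _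
  obtain ⟨σ, hσ, hσκp, hα⟩ : ∃ σ : ℝ, σ ^ 2 = 1 ∧ 0 ≤ σ * κp * (θ / lam) ∧ ∀ X,
      α₁ X = Real.exp (-σ * (θ / lam) * ∫ s in (0 : ℝ)..X, κ s) ∧ α₂ X = σ * I * α₁ X := by
    have hreassoc : θ * κp / lam = κp * (θ / lam) := by ring
    by_cases hpos : 0 < θ * κp / lam
    · refine ⟨1, one_pow 2, ?_, fun X => ⟨?_, ?_⟩⟩
      · linarith
      · simp [hα₁ X, hpos]
      · simp [hα₂ X, hpos]
    · refine ⟨-1, by norm_num, ?_, fun X => ⟨?_, ?_⟩⟩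
      · linarith
      · simp [hα₁ X, hpos]
      · simp [hα₂ X, hpos]
  have hmode σ (hσ : σ ^ 2 = 1) := dirac_mode_eq hlam hκc hσ (hβ₁.differentiable one_ne_zero)
    (hβ₂.differentiable one_ne_zero) h₁ h₂
  have hvanishing_mode : β₁ 0 + σ * I * β₂ 0 = 0 :=
    eq_zero_of_tendsto_of_eq_mul_exp (hmode σ hσ)
      (isBoundedUnder_ge_mul_intervalIntegral hintp (by linarith))
      (by simpa using hβ₁top.add (hβ₂top.const_mul (σ * I)))
  refine ⟨(β₁ 0 - σ * I * β₂ 0) / 2, fun X => ?_⟩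
  have hplus := hmode σ hσ X
  have hminus := hmode (-σ) (by rwa [neg_sq]) X
  have hσC : (σ : ℂ) ^ 2 = 1 := by exact_mod_cast hσ
  rw [hvanishing_mode, zero_mul] at hplus
  rw [ofReal_neg] at hminus
  rw [(hα X).2, (hα X).1]
  constructor
  · linear_combination (hplus + hminus) / 2
  · linear_combination (-σ * I / 2) * hplus + (σ * I / 2) * hminus + β₂ X * σ ^ 2 * I_sq
      - β₂ X * hσC

/-- Simplicity of the zero mode of the 1D Dirac operator. -/
theorem dirac_zero_mode_simplicity
    (lam θ : ℝ) (hlam : lam ≠ 0) (hθ : θ ≠ 0)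
    (κ : ℝ → ℝ) (hκc : Continuous κ) (hκb : ∃ M : ℝ, ∀ X, |κ X| ≤ M)
    (κp κm : ℝ) (hκp : κp ≠ 0) (hκm : κm ≠ 0) (hsign : 0 < κp * κm)
    (hintp : IntegrableOn (fun X => κ X - κp) (Set.Ici (0 : ℝ)))
    (hintm : IntegrableOn (fun X => κ X + κm) (Set.Iic (0 : ℝ)))
    (α₁ α₂ : ℝ → ℂ)
    (hα₁ : ∀ X : ℝ, α₁ X = if 0 < θ * κp / lam
        then ((Real.exp (-(θ / lam) * ∫ s in (0:ℝ)..X, κ s) : ℝ) : ℂ)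
        else ((Real.exp ((θ / lam) * ∫ s in (0:ℝ)..X, κ s) : ℝ) : ℂ))
    (hα₂ : ∀ X : ℝ, α₂ X = if 0 < θ * κp / lam
        then Complex.I * α₁ X else -Complex.I * α₁ X) :
    ∀ β₁ β₂ : ℝ → ℂ, ContDiff ℝ 1 β₁ → ContDiff ℝ 1 β₂ →
      (∀ X : ℝ, Complex.I * (lam : ℂ) * deriv β₁ X + (θ : ℂ) * (κ X : ℂ) * β₂ X = 0) →
      (∀ X : ℝ, -(Complex.I * (lam : ℂ)) * deriv β₂ X + (θ : ℂ) * (κ X : ℂ) * β₁ X = 0) →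
      Tendsto β₁ atTop (nhds 0) → Tendsto β₁ atBot (nhds 0) →
      Tendsto β₂ atTop (nhds 0) → Tendsto β₂ atBot (nhds 0) →
      ∃ c : ℂ, ∀ X : ℝ, β₁ X = c * α₁ X ∧ β₂ X = c * α₂ X :=
  dirac_zero_mode_simplicity_general lam θ hlam κ hκc κp hintp α₁ α₂ hα₁ hα₂
end

section
/- Nonexistence of a zero mode when the domain-wall asymptotics have the same sign. Let λ, θ be nonzero real numbers and let κ : ℝ → ℝ be continuous and bounded, with nonzero constants κ_{+∞}, κ_{−∞} satisfying κ_{+∞}·κ_{−∞} < 0, such that X ↦ κ(X) − κ_{+∞} is integrable on [0, ∞) and X ↦ κ(X) + κ_{−∞} is integrable on (−∞, 0] (so that κ(X) → κ_{+∞} as X → +∞ and κ(X) → −κ_{−∞} as X → −∞, these two limits having the same sign). Then the only continuously differentiable α : ℝ → ℂ² satisfying iλσ₃α′(X) + θκ(X)σ₁α(X) = 0 for all X and α(X) → 0 as X → ±∞ is α ≡ 0. -/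
/-!
Writing `K X = ∫₀ˣ κ`, the combinations `β₁ + iβ₂` and `β₁ - iβ₂` decouple into the scalar
equations `F' = ±(θ/λ) κ F`, solved by `F X = exp (±(θ/λ) K X) F 0`. Since `κ → κ₊` at `+∞`
and `κ → -κ₋` at `-∞` with `κ₊ κ₋ < 0`, `K` grows linearly with the same sign of slope at both
ends, so `K → +∞` at one end and `K → -∞` at the other. Hence for every real `r`, `r K` is
eventually nonnegative at one of the two ends; taking `r = ±θ/λ`, there `‖F X‖ ≥ ‖F 0‖`, and the
decay of `F` forces `F 0 = 0`.
-/

open MeasureTheory Filter Set Topology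

lemma eq_zero_of_tendsto_zero_of_eventually_norm_le {α E : Type*} [NormedAddCommGroup E]
    {l : Filter α} [l.NeBot] {F : α → E} {v : E} (hF : Tendsto F l (𝓝 0))
    (hv : ∀ᶠ x in l, ‖v‖ ≤ ‖F x‖) : v = 0 :=
  norm_le_zero_iff.mp (ge_of_tendsto (by simpa using hF.norm) hv)

section Primitive

variable {κ : ℝ → ℝ}

lemma tendsto_mul_intervalIntegral_atTop {p : ℝ} (hp : p ≠ 0)
    (hint : IntegrableOn (fun X => κ X - p) (Ici 0)) :
    Tendsto (fun X => p * ∫ t in (0 : ℝ)..X, κ t) atTop atTop := by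
  have hlim := intervalIntegral_tendsto_integral_Ioi 0 (hint.mono_set Ioi_subset_Ici_self)
    tendsto_id
  have hsplit : ∀ᶠ X in atTop,
      p * (∫ t in (0 : ℝ)..X, (κ t - p)) + p ^ 2 * X = p * ∫ t in (0 : ℝ)..X, κ t := by
    filter_upwards [eventually_ge_atTop 0] with X hX
    have hsub : IntervalIntegrable (fun t => κ t - p) volume 0 X :=
      (intervalIntegrable_iff_integrableOn_Icc_of_le hX).mpr (hint.mono_set Icc_subset_Ici_self)
    have hadd := intervalIntegral.integral_add hsub (intervalIntegrable_const (c := p))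
    simp only [sub_add_cancel, intervalIntegral.integral_const, smul_eq_mul] at hadd
    rw [hadd]
    ring
  exact ((hlim.const_mul p).add_atTop (tendsto_id.const_mul_atTop (sq_pos_of_ne_zero hp))).congr'
    hsplit

lemma tendsto_mul_intervalIntegral_atBot {q : ℝ} (hq : q ≠ 0)
    (hint : IntegrableOn (fun X => κ X - q) (Iic 0)) :
    Tendsto (fun X => q * ∫ t in (0 : ℝ)..X, κ t) atBot atBot := by
  have hlim := intervalIntegral_tendsto_integral_Iic 0 hint tendsto_id
  have hsplit : ∀ᶠ X in atBot,
      -(q * ∫ t in X..(0 : ℝ), (κ t - q)) + q ^ 2 * X = q * ∫ t in (0 : ℝ)..X, κ t := by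
    filter_upwards [eventually_le_atBot 0] with X hX
    have hsub : IntervalIntegrable (fun t => κ t - q) volume X 0 :=
      (intervalIntegrable_iff_integrableOn_Icc_of_le hX).mpr (hint.mono_set Icc_subset_Iic_self)
    have hadd := intervalIntegral.integral_add hsub (intervalIntegrable_const (c := q))
    simp only [sub_add_cancel, intervalIntegral.integral_const, smul_eq_mul] at hadd
    have hsymm := intervalIntegral.integral_symm (μ := volume) (f := κ) 0 X
    linear_combination q * hadd - q * hsymm
  exact ((hlim.const_mul q).neg.add_atBot
    (tendsto_id.const_mul_atBot (sq_pos_of_ne_zero hq))).congr' hsplit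

lemma eventually_nonneg_mul_intervalIntegral_atTop_or_atBot {κp κm : ℝ} (hsign : κp * κm < 0)
    (hintp : IntegrableOn (fun X => κ X - κp) (Ici 0))
    (hintm : IntegrableOn (fun X => κ X + κm) (Iic 0)) (r : ℝ) :
    (∀ᶠ X in atTop, 0 ≤ r * ∫ t in (0 : ℝ)..X, κ t) ∨
      (∀ᶠ X in atBot, 0 ≤ r * ∫ t in (0 : ℝ)..X, κ t) := by
  have hκp : κp ≠ 0 := left_ne_zero_of_mul hsign.ne
  have hκm : κm ≠ 0 := right_ne_zero_of_mul hsign.ne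
  have hintm' : IntegrableOn (fun X => κ X - -κm) (Iic 0) := by simpa only [sub_neg_eq_add]
  have hT := (tendsto_mul_intervalIntegral_atTop hκp hintp).eventually (eventually_ge_atTop 0)
  have hB := (tendsto_mul_intervalIntegral_atBot (neg_ne_zero.mpr hκm) hintm').eventually
    (eventually_le_atBot 0)
  rcases le_or_gt 0 (r * κp) with hr | hr
  · left
    filter_upwards [hT] with X hX
    nlinarith [mul_nonneg hr hX, sq_pos_of_ne_zero hκp]
  · have hrm : 0 < r * κm := by nlinarith [sq_pos_of_ne_zero hκp]
    right
    filter_upwards [hB] with X hX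
    nlinarith [mul_nonneg hrm.le (neg_nonneg.mpr hX), sq_pos_of_ne_zero hκm]

end Primitive

section ScalarEquation

variable {κ : ℝ → ℝ} {c : ℂ} {F : ℝ → ℂ}

lemma eq_cexp_mul_intervalIntegral_mul (hκ : Continuous κ)
    (hF : ∀ X, HasDerivAt F (c * κ X * F X) X) (X : ℝ) :
    F X = Complex.exp (c * ∫ t in (0 : ℝ)..X, κ t) * F 0 := by
  set K : ℝ → ℝ := fun X => ∫ t in (0 : ℝ)..X, κ t
  have hφ : ∀ Y, HasDerivAt (fun Y => Complex.exp (-c * K Y) * F Y) 0 Y := by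
    intro Y
    have hK : HasDerivAt (fun Y => (K Y : ℂ)) (κ Y) Y :=
      (hκ.integral_hasStrictDerivAt 0 Y).hasDerivAt.ofReal_comp
    exact (((hK.const_mul (-c)).cexp).mul (hF Y)).congr_deriv (by ring)
  have hconst := is_const_of_deriv_eq_zero (fun Y => (hφ Y).differentiableAt)
    (fun Y => (hφ Y).deriv) X 0
  simp only [K, intervalIntegral.integral_same, Complex.ofReal_zero, mul_zero,
    Complex.exp_zero, one_mul] at hconst
  rw [← hconst, ← mul_assoc, ← Complex.exp_add, neg_mul, add_neg_cancel, Complex.exp_zero, one_mul]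

lemma eq_zero_of_hasDerivAt_eq_mul_of_tendsto_zero (hκ : Continuous κ)
    (hF : ∀ X, HasDerivAt F (c * κ X * F X) X)
    (hT : Tendsto F atTop (𝓝 0)) (hB : Tendsto F atBot (𝓝 0))
    (hK : (∀ᶠ X in atTop, 0 ≤ c.re * ∫ t in (0 : ℝ)..X, κ t) ∨
      (∀ᶠ X in atBot, 0 ≤ c.re * ∫ t in (0 : ℝ)..X, κ t)) (X : ℝ) :
    F X = 0 := by
  have hsol := eq_cexp_mul_intervalIntegral_mul hκ hF
  have hgrowth : ∀ Y, 0 ≤ c.re * (∫ t in (0 : ℝ)..Y, κ t) → ‖F 0‖ ≤ ‖F Y‖ := by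
    intro Y hY
    rw [hsol Y, norm_mul, Complex.norm_exp, Complex.re_mul_ofReal]
    exact le_mul_of_one_le_left (norm_nonneg _) (Real.one_le_exp hY)
  have h0 : F 0 = 0 := by
    rcases hK with hK | hK
    · exact eq_zero_of_tendsto_zero_of_eventually_norm_le hT (hK.mono hgrowth)
    · exact eq_zero_of_tendsto_zero_of_eventually_norm_le hB (hK.mono hgrowth)
  rw [hsol X, h0, mul_zero]

end ScalarEquation

lemma hasDerivAt_add_mul_of_dirac_eq_zero {lam θ : ℝ} (hlam : lam ≠ 0) {κ : ℝ → ℝ}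
    {β₁ β₂ : ℝ → ℂ} (hβ₁ : Differentiable ℝ β₁) (hβ₂ : Differentiable ℝ β₂)
    (e1 : ∀ X, Complex.I * lam * deriv β₁ X + θ * κ X * β₂ X = 0)
    (e2 : ∀ X, -(Complex.I * lam) * deriv β₂ X + θ * κ X * β₁ X = 0)
    {s : ℂ} (hs : s ^ 2 = -1) (X : ℝ) :
    HasDerivAt (fun Y => β₁ Y + s * β₂ Y)
      (-(Complex.I * s) * (θ / lam) * κ X * (β₁ X + s * β₂ X)) X := by
  have hlamC : (lam : ℂ) ≠ 0 := Complex.ofReal_ne_zero.mpr hlam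
  refine ((hβ₁ X).hasDerivAt.add ((hβ₂ X).hasDerivAt.const_mul s)).congr_deriv ?_
  linear_combination (norm := skip) (-Complex.I * e1 X + Complex.I * s * e2 X
    + (lam * deriv β₁ X + s * lam * deriv β₂ X) * Complex.I_sq
    + Complex.I * θ * κ X * β₂ X * hs) / lam
  field_simp
  ring

theorem dirac_zero_mode_nonexistence_general
    (lam θ : ℝ) (hlam : lam ≠ 0)
    (κ : ℝ → ℝ) (hκc : Continuous κ)
    (κp κm : ℝ) (hsign : κp * κm < 0)
    (hintp : IntegrableOn (fun X => κ X - κp) (Set.Ici (0 : ℝ)))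
    (hintm : IntegrableOn (fun X => κ X + κm) (Set.Iic (0 : ℝ))) :
    ∀ β₁ β₂ : ℝ → ℂ, ContDiff ℝ 1 β₁ → ContDiff ℝ 1 β₂ →
      (∀ X : ℝ, Complex.I * (lam : ℂ) * deriv β₁ X + (θ : ℂ) * (κ X : ℂ) * β₂ X = 0) →
      (∀ X : ℝ, -(Complex.I * (lam : ℂ)) * deriv β₂ X + (θ : ℂ) * (κ X : ℂ) * β₁ X = 0) →
      Tendsto β₁ atTop (nhds 0) → Tendsto β₁ atBot (nhds 0) →
      Tendsto β₂ atTop (nhds 0) → Tendsto β₂ atBot (nhds 0) →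
      ∀ X : ℝ, β₁ X = 0 ∧ β₂ X = 0 := by
  intro β₁ β₂ hβ₁ hβ₂ e1 e2 h1T h1B h2T h2B X
  have hcomb : ∀ s : ℂ, s ^ 2 = -1 → β₁ X + s * β₂ X = 0 := fun s hs =>
    eq_zero_of_hasDerivAt_eq_mul_of_tendsto_zero hκc
      (hasDerivAt_add_mul_of_dirac_eq_zero hlam (hβ₁.differentiable one_ne_zero)
        (hβ₂.differentiable one_ne_zero) e1 e2 hs)
      (by simpa using h1T.add (h2T.const_mul s)) (by simpa using h1B.add (h2B.const_mul s))
      (eventually_nonneg_mul_intervalIntegral_atTop_or_atBot hsign hintp hintm _) X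
  have hplus := hcomb Complex.I Complex.I_sq
  have hminus := hcomb (-Complex.I) (by rw [neg_sq, Complex.I_sq])
  constructor
  · linear_combination (hplus + hminus) / 2
  · linear_combination (-Complex.I / 2) * (hplus - hminus) + β₂ X * Complex.I_sq

/-- Nonexistence of a zero mode when the domain-wall asymptotics have the same sign. -/
theorem dirac_zero_mode_nonexistence
    (lam θ : ℝ) (hlam : lam ≠ 0) (hθ : θ ≠ 0)
    (κ : ℝ → ℝ) (hκc : Continuous κ) (hκb : ∃ M : ℝ, ∀ X, |κ X| ≤ M)
    (κp κm : ℝ) (hκp : κp ≠ 0) (hκm : κm ≠ 0) (hsign : κp * κm < 0)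
    (hintp : IntegrableOn (fun X => κ X - κp) (Set.Ici (0 : ℝ)))
    (hintm : IntegrableOn (fun X => κ X + κm) (Set.Iic (0 : ℝ))) :
    ∀ β₁ β₂ : ℝ → ℂ, ContDiff ℝ 1 β₁ → ContDiff ℝ 1 β₂ →
      (∀ X : ℝ, Complex.I * (lam : ℂ) * deriv β₁ X + (θ : ℂ) * (κ X : ℂ) * β₂ X = 0) →
      (∀ X : ℝ, -(Complex.I * (lam : ℂ)) * deriv β₂ X + (θ : ℂ) * (κ X : ℂ) * β₁ X = 0) →
      Tendsto β₁ atTop (nhds 0) → Tendsto β₁ atBot (nhds 0) →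
      Tendsto β₂ atTop (nhds 0) → Tendsto β₂ atBot (nhds 0) →
      ∀ X : ℝ, β₁ X = 0 ∧ β₂ X = 0 :=
  dirac_zero_mode_nonexistence_general lam θ hlam κ hκc κp κm hsign hintp hintm
end

section
/- L² bounds on Poisson-summation tails. Fix τ ∈ (0, 1). There exist δ₀ ∈ (0, 1] and C > 0, depending only on τ, with the following property. Let 0 < δ < δ₀, let f : ℝ × ℝ → ℂ and g : ℝ → ℂ be continuous with f(x+1, ω) = f(x, ω) and g(x+1) = g(x), and set C_f := sup{ |f(x, ω)| : x ∈ [0,1], |ω| ≤ δ^τ } and C_g := sup_{x ∈ [0,1]} |g(x)|, assumed finite. Let Γ̂ : ℝ × ℝ → ℂ be continuous, 1-periodic in its first variable, with M := ‖ sup_{x ∈ [0,1]} |Γ̂(x, ·)| ‖_{L^{2,1}(ℝ)} < ∞. For m ∈ ℤ define I_m(ξ; δ) := ∫₀¹ e^{2πimx} Γ̂(x, 2πm/δ + ξ) conj(f(x, δξ)) g(x) dx. Then for almost every ξ with |ξ| ≤ δ^{τ−1} the series ∑_{|m| ≥ 1} I_m(ξ; δ) and ∑_{m ∈ ℤ}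 I_m(ξ; δ) converge absolutely, and ‖ 1_{|ξ| ≤ δ^{τ−1}} ∑_{|m| ≥ 1} I_m(ξ; δ) ‖_{L²(ℝ_ξ)} ≤ C C_f C_g δ M and ‖ 1_{|ξ| ≤ δ^{τ−1}} ∑_{m ∈ ℤ} I_m(ξ; δ) ‖_{L²(ℝ_ξ)} ≤ C C_f C_g M. -/
/-!
For `|ξ| ≤ A := δ^(τ-1)` every coefficient satisfies `|I_m(ξ)| ≤ C_f C_g S(mL + ξ)`, where
`S ζ = sup_{x ∈ [0,1]} |Γ̂(x, ζ)|` and `L = 2π/δ`. Cauchy–Schwarz with the weights `1 + ζ²` gives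
`(∑_m S(mL + ξ))² ≤ (∑_m (1 + (mL + ξ)²)⁻¹) · ∑_m (1 + (mL + ξ)²) S(mL + ξ)²`. Because
`2A < L`, we have `|mL + ξ| ≥ |m| L / 2` for `m ≠ 0`, so the first factor is at most
`1 + (δ/π)² ∑ 1/m²`, and only `(δ/π)² ∑ 1/m²` once the term `m = 0` is dropped. The translates
`mL + [-A, A]` are pairwise disjoint, so integrating the second factor over `[-A, A]` gives at
most `‖S‖²_{L^{2,1}} ≤ M²`; its finiteness also yields the almost-everywhere absolute convergence.
-/

open MeasureTheory Filter
open scoped ENNReal NNReal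
open Function

theorem ENNReal.sq_tsum_le_tsum_mul_tsum {ι : Type*} {a v w : ι → ℝ≥0∞}
    (h : ∀ i, a i ^ 2 ≤ v i * w i) : (∑' i, a i) ^ 2 ≤ (∑' i, v i) * ∑' i, w i := by
  let _ : MeasurableSpace ι := ⊤
  have hsq : ∀ x : ℝ≥0∞, (x ^ (2⁻¹ : ℝ)) ^ 2 = x := fun x => by
    rw [← ENNReal.rpow_natCast, ← ENNReal.rpow_mul]; norm_num
  have hle : ∀ i, a i ≤ v i ^ (2⁻¹ : ℝ) * w i ^ (2⁻¹ : ℝ) := fun i => by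
    rw [← ENNReal.mul_rpow_of_nonneg _ _ (by norm_num), ENNReal.le_rpow_inv_iff two_pos]
    exact_mod_cast h i
  have holder := ENNReal.lintegral_mul_le_Lp_mul_Lq (Measure.count : Measure ι) .two_two
    (measurable_from_top (f := fun i => v i ^ (2⁻¹ : ℝ))).aemeasurable
    (measurable_from_top (f := fun i => w i ^ (2⁻¹ : ℝ))).aemeasurable
  simp only [lintegral_count' measurable_from_top, ← ENNReal.rpow_mul, one_div, Pi.mul_apply,
    inv_mul_cancel₀ (two_ne_zero (α := ℝ)), ENNReal.rpow_one] at holder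
  calc (∑' i, a i) ^ 2 ≤ (∑' i, v i ^ (2⁻¹ : ℝ) * w i ^ (2⁻¹ : ℝ)) ^ 2 := by
        gcongr with i; exact hle i
    _ ≤ ((∑' i, v i) ^ (2⁻¹ : ℝ) * (∑' i, w i) ^ (2⁻¹ : ℝ)) ^ 2 := by gcongr
    _ = (∑' i, v i) * ∑' i, w i := by rw [mul_pow, hsq, hsq]

theorem ENNReal.ofReal_mul_le_of_le_ofReal {x y z : ℝ} {a : ℝ≥0∞} (hx : 0 ≤ x)
    (ha : a ≤ ENNReal.ofReal z) (h : x * z ≤ y) : ENNReal.ofReal x * a ≤ ENNReal.ofReal y :=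
  calc ENNReal.ofReal x * a ≤ ENNReal.ofReal x * ENNReal.ofReal z := by gcongr
    _ = ENNReal.ofReal (x * z) := (ENNReal.ofReal_mul hx).symm
    _ ≤ ENNReal.ofReal y := ENNReal.ofReal_le_ofReal h

theorem IsCompact.continuous_iSup_norm {X Y E : Type*} [TopologicalSpace X] [TopologicalSpace Y]
    [SeminormedAddCommGroup E] {K : Set X} (hK : IsCompact K) {Γ : X → Y → E}
    (hΓ : Continuous (uncurry Γ)) : Continuous fun y => ⨆ x : K, ‖Γ x y‖ := by
  simpa only [sSup_image'] using
    hK.continuous_sSup (f := fun y x => ‖Γ x y‖) (hΓ.comp continuous_swap).norm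

theorem IsCompact.norm_le_iSup_norm {X E : Type*} [TopologicalSpace X]
    [SeminormedAddCommGroup E] {K : Set X} (hK : IsCompact K) {F : X → E} (hF : ContinuousOn F K)
    {x : X} (hx : x ∈ K) : ‖F x‖ ≤ ⨆ y : K, ‖F y‖ := by
  refine le_ciSup (f := fun y : K => ‖F y‖) ?_ ⟨x, hx⟩
  simpa only [Set.image_eq_range] using hK.bddAbove_image hF.norm

theorem lintegral_tsum_comp_const_add_le {G ι : Type*} [MeasurableSpace G] [AddGroup G]
    [MeasurableAdd G] {μ : Measure G} [μ.IsAddLeftInvariant] [Countable ι] {s : Set G}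
    (hs : MeasurableSet s) {c : ι → G} (hc : Pairwise (Disjoint on fun i => (c i + ·) '' s))
    {φ : G → ℝ≥0∞} (hφ : Measurable φ) :
    ∫⁻ x in s, ∑' i, φ (c i + x) ∂μ ≤ ∫⁻ y, φ y ∂μ := by
  have hemb (i : ι) : MeasurableEmbedding (c i + ·) :=
    (MeasurableEquiv.addLeft (c i)).measurableEmbedding
  calc ∫⁻ x in s, ∑' i, φ (c i + x) ∂μ = ∑' i, ∫⁻ x in s, φ (c i + x) ∂μ :=
        lintegral_tsum fun i => (hφ.comp (measurable_const_add (c i))).aemeasurable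
    _ = ∑' i, ∫⁻ y in (c i + ·) '' s, φ y ∂μ := tsum_congr fun i =>
        (measurePreserving_add_left μ (c i)).setLIntegral_comp_emb (hemb i) φ s
    _ = ∫⁻ y in ⋃ i, (c i + ·) '' s, φ y ∂μ :=
        (lintegral_iUnion (fun i => (hemb i).measurableSet_image.2 hs) hc φ).symm
    _ ≤ ∫⁻ y, φ y ∂μ := setLIntegral_le_lintegral _ _

theorem pairwise_disjoint_image_intCast_mul_add_Icc {A L : ℝ} (h : 2 * A < L) :
    Pairwise (Disjoint on fun m : ℤ => ((m * L : ℝ) + ·) '' Set.Icc (-A) A) := by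
  intro m n hmn
  simp only [Function.onFun, Set.image_const_add_Icc, Set.disjoint_left, Set.mem_Icc]
  rintro x ⟨hm₁, hm₂⟩ ⟨hn₁, hn₂⟩
  have hL : 0 < L := by linarith
  rcases hmn.lt_or_gt with hlt | hlt
  · have hgap : (m : ℝ) + 1 ≤ n := by exact_mod_cast hlt
    nlinarith [mul_le_mul_of_nonneg_right hgap hL.le]
  · have hgap : (n : ℝ) + 1 ≤ m := by exact_mod_cast hlt
    nlinarith [mul_le_mul_of_nonneg_right hgap hL.le]

theorem sq_le_sq_intCast_mul_add {m : ℤ} (hm : m ≠ 0) {L ξ : ℝ} (hL : 0 ≤ L)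
    (hξ : 2 * |ξ| ≤ L) : (m * L / 2) ^ 2 ≤ (m * L + ξ) ^ 2 := by
  have h1 : (1 : ℝ) ≤ |(m : ℝ)| := by exact_mod_cast Int.one_le_abs hm
  rw [sq_le_sq, abs_div, abs_mul, abs_of_nonneg hL, abs_two]
  have := abs_add_le (m * L + ξ) (-ξ)
  rw [add_neg_cancel_right, abs_mul, abs_of_nonneg hL, abs_neg] at this
  nlinarith

theorem one_le_mul_one_add_sq_intCast_mul_add {m : ℤ} (hm : m ≠ 0) {L ξ : ℝ}
    (hξ : 2 * |ξ| < L) : 1 ≤ 4 / L ^ 2 * (1 / (m : ℝ) ^ 2) * (1 + (m * L + ξ) ^ 2) := by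
  have hm' : (m : ℝ) ≠ 0 := Int.cast_ne_zero.2 hm
  have hL : 0 < L := by linarith [abs_nonneg ξ]
  calc (1 : ℝ) = 4 / L ^ 2 * (1 / (m : ℝ) ^ 2) * (m * L / 2) ^ 2 := by field_simp; ring
    _ ≤ 4 / L ^ 2 * (1 / (m : ℝ) ^ 2) * (1 + (m * L + ξ) ^ 2) := by
      gcongr
      exact (sq_le_sq_intCast_mul_add hm hL.le hξ.le).trans (le_add_of_nonneg_left zero_le_one)

/-- `∫⁻ ζ, l21Integrand S ζ` is `‖S‖²` in `L^{2,1}(ℝ)`. -/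
def l21Integrand (S : ℝ → ℝ) (ζ : ℝ) : ℝ≥0∞ := ENNReal.ofReal ((1 + ζ ^ 2) * S ζ ^ 2)

theorem measurable_l21Integrand {S : ℝ → ℝ} (hS : Measurable S) : Measurable (l21Integrand S) :=
  ENNReal.measurable_ofReal.comp ((measurable_const.add (measurable_id.pow_const 2)).mul
    (hS.pow_const 2))

theorem sq_enorm_le_ofReal_mul_l21Integrand {E : Type*} [SeminormedAddCommGroup E] {z : E}
    {S : ℝ → ℝ} {B r ζ : ℝ} (hz : ‖z‖ ≤ B * S ζ) (hr : 1 ≤ r * (1 + ζ ^ 2)) :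
    ‖z‖ₑ ^ 2 ≤ ENNReal.ofReal (B ^ 2 * r) * l21Integrand S ζ := by
  have hr0 : 0 ≤ r := nonneg_of_mul_nonneg_left (zero_le_one.trans hr) (by positivity)
  rw [l21Integrand, ← ENNReal.ofReal_mul (by positivity), ← ofReal_norm, ← ENNReal.ofReal_pow
    (norm_nonneg z)]
  refine ENNReal.ofReal_le_ofReal ?_
  calc ‖z‖ ^ 2 ≤ (B * S ζ) ^ 2 * 1 := by rw [mul_one]; gcongr
    _ ≤ (B * S ζ) ^ 2 * (r * (1 + ζ ^ 2)) := by gcongr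
    _ = B ^ 2 * r * ((1 + ζ ^ 2) * S ζ ^ 2) := by ring

theorem lintegral_l21Integrand_le_ofReal {S : ℝ → ℝ} {c : ℝ}
    (hint : Integrable fun ζ => (1 + ζ ^ 2) * S ζ ^ 2) (hle : ∫ ζ, (1 + ζ ^ 2) * S ζ ^ 2 ≤ c) :
    ∫⁻ ζ, l21Integrand S ζ ≤ ENNReal.ofReal c :=
  (ofReal_integral_eq_lintegral_ofReal hint (ae_of_all _ fun _ => by positivity)).symm.trans_le
    (ENNReal.ofReal_le_ofReal hle)

section Pointwise

variable {E : Type*} [NormedAddCommGroup E] {J : ℤ → E} {S : ℝ → ℝ} {L B ξ : ℝ}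

theorem tsum_ofReal_mul_one_div_sq_int {c : ℝ} (hc : 0 ≤ c) :
    ∑' m : ℤ, ENNReal.ofReal (c * (1 / (m : ℝ) ^ 2))
      = ENNReal.ofReal (c * ∑' m : ℤ, 1 / (m : ℝ) ^ 2) := by
  rw [← ENNReal.ofReal_tsum_of_nonneg (fun _ => by positivity)
    ((Real.summable_one_div_int_pow.2 one_lt_two).mul_left c), tsum_mul_left]

-- The Cauchy–Schwarz weight `1 / m ^ 2` is `1 / 0 = 0` at `m = 0`, matching the dropped term.
theorem sq_tsum_enorm_ite_le (hξ : 2 * |ξ| < L)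
    (hJ : ∀ m, ‖J m‖ ≤ B * S (m * L + ξ)) :
    (∑' m, ‖if m = 0 then 0 else J m‖ₑ) ^ 2
      ≤ ENNReal.ofReal (B ^ 2 * (4 / L ^ 2 * ∑' m : ℤ, 1 / (m : ℝ) ^ 2))
        * ∑' m : ℤ, l21Integrand S (m * L + ξ) := by
  rw [← mul_assoc, ← tsum_ofReal_mul_one_div_sq_int (by positivity)]
  refine ENNReal.sq_tsum_le_tsum_mul_tsum fun m => ?_
  rcases eq_or_ne m 0 with rfl | hm
  · simp
  · rw [if_neg hm, mul_assoc]
    exact sq_enorm_le_ofReal_mul_l21Integrand (hJ m)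
      (one_le_mul_one_add_sq_intCast_mul_add hm hξ)

theorem sq_tsum_enorm_le (hξ : 2 * |ξ| < L)
    (hJ : ∀ m, ‖J m‖ ≤ B * S (m * L + ξ)) :
    (∑' m, ‖J m‖ₑ) ^ 2
      ≤ ENNReal.ofReal (B ^ 2 * (1 + 4 / L ^ 2 * ∑' m : ℤ, 1 / (m : ℝ) ^ 2))
        * ∑' m : ℤ, l21Integrand S (m * L + ξ) := by
  have hweights : ∑' m : ℤ, (ENNReal.ofReal (B ^ 2 * (4 / L ^ 2 * (1 / (m : ℝ) ^ 2)))
      + if m = 0 then ENNReal.ofReal (B ^ 2) else 0)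
      = ENNReal.ofReal (B ^ 2 * (1 + 4 / L ^ 2 * ∑' m : ℤ, 1 / (m : ℝ) ^ 2)) := by
    simp_rw [← mul_assoc]
    rw [ENNReal.tsum_add, tsum_ofReal_mul_one_div_sq_int (by positivity), tsum_ite_eq,
      ← ENNReal.ofReal_add (by positivity) (by positivity)]
    ring_nf
  rw [← hweights]
  refine ENNReal.sq_tsum_le_tsum_mul_tsum fun m => ?_
  rcases eq_or_ne m 0 with rfl | hm
  · simpa using sq_enorm_le_ofReal_mul_l21Integrand (r := 1) (hJ 0)
      (by rw [one_mul]; exact le_add_of_nonneg_right (sq_nonneg _))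
  · rw [if_neg hm, add_zero]
    exact sq_enorm_le_ofReal_mul_l21Integrand (hJ m)
      (one_le_mul_one_add_sq_intCast_mul_add hm hξ)

end Pointwise

section Integrated

variable {E : Type*} [NormedAddCommGroup E] {J : ℤ → ℝ → E} {S : ℝ → ℝ} {A L B : ℝ}

theorem setLIntegral_Icc_le_mul_lintegral {F φ : ℝ → ℝ≥0∞} (hφ : Measurable φ) (hAL : 2 * A < L)
    {W : ℝ≥0∞} (hF : ∀ ξ ∈ Set.Icc (-A) A, F ξ ≤ W * ∑' m : ℤ, φ (m * L + ξ)) :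
    ∫⁻ ξ in Set.Icc (-A) A, F ξ ≤ W * ∫⁻ ζ, φ ζ :=
  calc ∫⁻ ξ in Set.Icc (-A) A, F ξ ≤ ∫⁻ ξ in Set.Icc (-A) A, W * ∑' m : ℤ, φ (m * L + ξ) :=
        setLIntegral_mono' measurableSet_Icc hF
    _ = W * ∫⁻ ξ in Set.Icc (-A) A, ∑' m : ℤ, φ (m * L + ξ) :=
        lintegral_const_mul W (.tsum fun _ => hφ.comp (measurable_const_add _))
    _ ≤ W * ∫⁻ ζ, φ ζ := mul_le_mul_right (lintegral_tsum_comp_const_add_le measurableSet_Icc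
          (pairwise_disjoint_image_intCast_mul_add_Icc hAL) hφ) W

theorem two_mul_abs_lt_of_mem_Icc (hAL : 2 * A < L) {ξ : ℝ} (hξ : ξ ∈ Set.Icc (-A) A) :
    2 * |ξ| < L := by
  have := abs_le.2 hξ
  linarith

theorem lintegral_sq_enorm_tsum_ite_le (hS : Measurable S) (hAL : 2 * A < L)
    (hJ : ∀ ξ ∈ Set.Icc (-A) A, ∀ m : ℤ, ‖J m ξ‖ ≤ B * S (m * L + ξ)) :
    ∫⁻ ξ in Set.Icc (-A) A, ‖∑' m, if m = 0 then 0 else J m ξ‖ₑ ^ 2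
      ≤ ENNReal.ofReal (B ^ 2 * (4 / L ^ 2 * ∑' m : ℤ, 1 / (m : ℝ) ^ 2))
        * ∫⁻ ζ, l21Integrand S ζ := by
  refine setLIntegral_Icc_le_mul_lintegral (measurable_l21Integrand hS) hAL fun ξ hξ => ?_
  calc ‖∑' m, if m = 0 then 0 else J m ξ‖ₑ ^ 2
      ≤ (∑' m, ‖if m = 0 then 0 else J m ξ‖ₑ) ^ 2 := by gcongr; exact enorm_tsum_le_tsum_enorm
    _ ≤ _ := sq_tsum_enorm_ite_le (two_mul_abs_lt_of_mem_Icc hAL hξ) (hJ ξ hξ)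

theorem lintegral_sq_enorm_tsum_le (hS : Measurable S) (hAL : 2 * A < L)
    (hJ : ∀ ξ ∈ Set.Icc (-A) A, ∀ m : ℤ, ‖J m ξ‖ ≤ B * S (m * L + ξ)) :
    ∫⁻ ξ in Set.Icc (-A) A, ‖∑' m, J m ξ‖ₑ ^ 2
      ≤ ENNReal.ofReal (B ^ 2 * (1 + 4 / L ^ 2 * ∑' m : ℤ, 1 / (m : ℝ) ^ 2))
        * ∫⁻ ζ, l21Integrand S ζ := by
  refine setLIntegral_Icc_le_mul_lintegral (measurable_l21Integrand hS) hAL fun ξ hξ => ?_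
  calc ‖∑' m, J m ξ‖ₑ ^ 2 ≤ (∑' m, ‖J m ξ‖ₑ) ^ 2 := by gcongr; exact enorm_tsum_le_tsum_enorm
    _ ≤ _ := sq_tsum_enorm_le (two_mul_abs_lt_of_mem_Icc hAL hξ) (hJ ξ hξ)

theorem ae_summable_norm_of_lintegral_l21Integrand_ne_top (hS : Measurable S) (hAL : 2 * A < L)
    (hJ : ∀ ξ ∈ Set.Icc (-A) A, ∀ m : ℤ, ‖J m ξ‖ ≤ B * S (m * L + ξ))
    (hN : ∫⁻ ζ, l21Integrand S ζ ≠ ⊤) :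
    ∀ᵐ ξ ∂volume.restrict (Set.Icc (-A) A), Summable fun m => ‖J m ξ‖ := by
  have hφ := measurable_l21Integrand hS
  have hfin : ∀ᵐ ξ ∂volume.restrict (Set.Icc (-A) A),
      ∑' m : ℤ, l21Integrand S (m * L + ξ) < ⊤ :=
    ae_lt_top (.tsum fun _ => hφ.comp (measurable_const_add _)) <| ne_top_of_le_ne_top hN <|
      lintegral_tsum_comp_const_add_le (μ := volume) measurableSet_Icc
        (pairwise_disjoint_image_intCast_mul_add_Icc hAL) hφ
  filter_upwards [hfin, ae_restrict_mem measurableSet_Icc] with ξ hξfin hξ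
  have hsq := sq_tsum_enorm_le (two_mul_abs_lt_of_mem_Icc hAL hξ) (hJ ξ hξ)
  have : (∑' m, ‖J m ξ‖ₑ) ^ 2 ≠ ⊤ :=
    ne_top_of_le_ne_top (ENNReal.mul_ne_top ENNReal.ofReal_ne_top hξfin.ne) hsq
  exact tsum_enorm_ne_top_iff_summable_norm.1 (by simpa [ENNReal.pow_eq_top_iff] using this)

end Integrated

/-- The coefficient `I_m(ξ; δ)`. -/
noncomputable def poissonCoeff (δ : ℝ) (f : ℝ → ℝ → ℂ) (g : ℝ → ℂ) (Γhat : ℝ → ℝ → ℂ) (m : ℤ)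
    (ξ : ℝ) : ℂ :=
  ∫ x in (0:ℝ)..1,
    Complex.exp (2 * (Real.pi : ℂ) * Complex.I * (m : ℂ) * (x : ℂ)) *
      Γhat x (2 * Real.pi * (m : ℝ) / δ + ξ) * (starRingEnd ℂ) (f x (δ * ξ)) * g x

theorem norm_poissonCoeff_le {δ ρ Cf Cg ξ : ℝ} {f : ℝ → ℝ → ℂ} {g : ℝ → ℂ} {Γhat : ℝ → ℝ → ℂ}
    {S : ℝ → ℝ} (hf : ∀ x ∈ Set.Icc (0:ℝ) 1, ∀ ω : ℝ, |ω| ≤ ρ → ‖f x ω‖ ≤ Cf)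
    (hg : ∀ x ∈ Set.Icc (0:ℝ) 1, ‖g x‖ ≤ Cg) (hΓ : ∀ x ∈ Set.Icc (0:ℝ) 1, ∀ ζ, ‖Γhat x ζ‖ ≤ S ζ)
    (hξ : |δ * ξ| ≤ ρ) (m : ℤ) :
    ‖poissonCoeff δ f g Γhat m ξ‖ ≤ Cf * Cg * S (m * (2 * Real.pi / δ) + ξ) := by
  have hbound : ∀ x ∈ Set.uIoc (0:ℝ) 1,
      ‖Complex.exp (2 * (Real.pi : ℂ) * Complex.I * (m : ℂ) * (x : ℂ)) *
        Γhat x (2 * Real.pi * (m : ℝ) / δ + ξ) * (starRingEnd ℂ) (f x (δ * ξ)) * g x‖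
        ≤ Cf * Cg * S (m * (2 * Real.pi / δ) + ξ) := by
    intro x hx
    rw [Set.uIoc_of_le zero_le_one] at hx
    have hx' : x ∈ Set.Icc (0:ℝ) 1 := Set.Ioc_subset_Icc_self hx
    have hexp : ‖Complex.exp (2 * (Real.pi : ℂ) * Complex.I * (m : ℂ) * (x : ℂ))‖ = 1 := by
      rw [show 2 * (Real.pi : ℂ) * Complex.I * m * x = ((2 * Real.pi * m * x : ℝ) : ℂ) * Complex.I
        by push_cast; ring, Complex.norm_exp_ofReal_mul_I]
    have hΓx := hΓ x hx' (m * (2 * Real.pi / δ) + ξ)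
    rw [show 2 * Real.pi * m / δ = m * (2 * Real.pi / δ) by ring, norm_mul, norm_mul, norm_mul,
      hexp, one_mul, RCLike.norm_conj]
    have hfx := hf x hx' _ hξ
    have hS0 := (norm_nonneg _).trans hΓx
    calc ‖Γhat x _‖ * ‖f x (δ * ξ)‖ * ‖g x‖ ≤ S (m * (2 * Real.pi / δ) + ξ) * Cf * Cg :=
          mul_le_mul (mul_le_mul hΓx hfx (norm_nonneg _) hS0) (hg x hx') (norm_nonneg _)
            (mul_nonneg hS0 ((norm_nonneg _).trans hfx))
      _ = Cf * Cg * S (m * (2 * Real.pi / δ) + ξ) := by ring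
  simpa [poissonCoeff] using intervalIntegral.norm_integral_le_of_norm_le_const hbound

theorem abs_mul_le_rpow_of_mem_Icc {δ τ ξ : ℝ} (hδ : 0 < δ)
    (hξ : ξ ∈ Set.Icc (-(δ ^ (τ - 1))) (δ ^ (τ - 1))) : |δ * ξ| ≤ δ ^ τ :=
  calc |δ * ξ| = δ * |ξ| := by rw [abs_mul, abs_of_pos hδ]
    _ ≤ δ * δ ^ (τ - 1) := by gcongr; exact abs_le.2 hξ
    _ = δ ^ τ := by rw [Real.rpow_sub_one hδ.ne', mul_div_cancel₀ _ hδ.ne']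

theorem two_mul_rpow_sub_one_lt_two_pi_div {δ τ : ℝ} (hδ : 0 < δ) (hδ1 : δ < 1) (hτ : 0 < τ) :
    2 * δ ^ (τ - 1) < 2 * Real.pi / δ := by
  rw [Real.rpow_sub_one hδ.ne', ← mul_div_assoc]
  gcongr
  linarith [Real.rpow_lt_one hδ.le hδ1 hτ, Real.pi_gt_three]

theorem four_div_sq_two_pi_div_le (δ : ℝ) : 4 / (2 * Real.pi / δ) ^ 2 ≤ δ ^ 2 := by
  rw [show 4 / (2 * Real.pi / δ) ^ 2 = δ ^ 2 / Real.pi ^ 2 by field_simp; ring]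
  exact div_le_self (sq_nonneg δ) (by nlinarith [Real.pi_gt_three])

/-- L² bounds on Poisson-summation tails. -/
theorem poisson_tail_L2_bounds (τ : ℝ) (hτ : τ ∈ Set.Ioo (0:ℝ) 1) :
    ∃ δ₀ ∈ Set.Ioc (0:ℝ) 1, ∃ C > (0:ℝ),
      ∀ δ : ℝ, 0 < δ → δ < δ₀ →
      ∀ (f : ℝ → ℝ → ℂ) (g : ℝ → ℂ) (Γhat : ℝ → ℝ → ℂ) (Cf Cg M : ℝ),
        (Continuous fun p : ℝ × ℝ => f p.1 p.2) → Continuous g →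
        (∀ x ω : ℝ, f (x + 1) ω = f x ω) → (∀ x : ℝ, g (x + 1) = g x) →
        (∀ x ∈ Set.Icc (0:ℝ) 1, ∀ ω : ℝ, |ω| ≤ δ ^ τ → ‖f x ω‖ ≤ Cf) →
        (∀ x ∈ Set.Icc (0:ℝ) 1, ‖g x‖ ≤ Cg) →
        (Continuous fun p : ℝ × ℝ => Γhat p.1 p.2) →
        (∀ x ζ : ℝ, Γhat (x + 1) ζ = Γhat x ζ) →
        0 ≤ M →
        Integrable (fun ζ : ℝ =>
          (1 + ζ ^ 2) * (⨆ x : Set.Icc (0:ℝ) 1, ‖Γhat (x : ℝ) ζ‖) ^ 2) →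
        (∫ ζ : ℝ, (1 + ζ ^ 2) * (⨆ x : Set.Icc (0:ℝ) 1, ‖Γhat (x : ℝ) ζ‖) ^ 2) ≤ M ^ 2 →
        (let I : ℤ → ℝ → ℂ := fun m ξ =>
          ∫ x in (0:ℝ)..1,
            Complex.exp (2 * (Real.pi : ℂ) * Complex.I * (m : ℂ) * (x : ℂ)) *
              Γhat x (2 * Real.pi * (m : ℝ) / δ + ξ) *
              (starRingEnd ℂ) (f x (δ * ξ)) * g x
        (∀ᵐ ξ ∂(volume.restrict (Set.Icc (-(δ ^ (τ - 1))) (δ ^ (τ - 1)))),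
            Summable fun m : ℤ => ‖I m ξ‖) ∧
        (∫⁻ ξ in Set.Icc (-(δ ^ (τ - 1))) (δ ^ (τ - 1)),
            (‖∑' m : ℤ, (if m = 0 then 0 else I m ξ)‖₊ : ℝ≥0∞) ^ 2)
          ≤ ENNReal.ofReal ((C * Cf * Cg * δ * M) ^ 2) ∧
        (∫⁻ ξ in Set.Icc (-(δ ^ (τ - 1))) (δ ^ (τ - 1)),
            (‖∑' m : ℤ, I m ξ‖₊ : ℝ≥0∞) ^ 2)
          ≤ ENNReal.ofReal ((C * Cf * Cg * M) ^ 2)) := by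
  set K := ∑' m : ℤ, 1 / (m : ℝ) ^ 2
  have hK : 0 ≤ K := tsum_nonneg fun _ => by positivity
  refine ⟨1, ⟨one_pos, le_rfl⟩, 1 + K, by positivity, fun δ hδ hδ1 f g Γhat Cf Cg M _ _ _ _ hf hg
    hΓ _ _ hint hle => ?_⟩
  set S := fun ζ => ⨆ x : Set.Icc (0:ℝ) 1, ‖Γhat x ζ‖
  have hS : Measurable S := (isCompact_Icc.continuous_iSup_norm hΓ).measurable
  have hΓS : ∀ x ∈ Set.Icc (0:ℝ) 1, ∀ ζ, ‖Γhat x ζ‖ ≤ S ζ := fun x hx ζ =>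
    isCompact_Icc.norm_le_iSup_norm (hΓ.comp (.prodMk_left ζ)).continuousOn hx
  have hN := lintegral_l21Integrand_le_ofReal (S := S) hint hle
  have hAL := two_mul_rpow_sub_one_lt_two_pi_div hδ hδ1 hτ.1
  have hI : ∀ ξ ∈ Set.Icc (-(δ ^ (τ - 1))) (δ ^ (τ - 1)), ∀ m : ℤ,
      ‖poissonCoeff δ f g Γhat m ξ‖ ≤ Cf * Cg * S (m * (2 * Real.pi / δ) + ξ) := fun ξ hξ =>
    norm_poissonCoeff_le hf hg hΓS (abs_mul_le_rpow_of_mem_Icc hδ hξ)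
  have hw := four_div_sq_two_pi_div_le δ
  have hδ2 : δ ^ 2 ≤ 1 := by nlinarith
  refine ⟨ae_summable_norm_of_lintegral_l21Integrand_ne_top hS hAL hI
    (ne_top_of_le_ne_top ENNReal.ofReal_ne_top hN), ?_, ?_⟩
  · have hwK : 4 / (2 * Real.pi / δ) ^ 2 * K ≤ δ ^ 2 * (1 + K) ^ 2 := by
      nlinarith [mul_le_mul_of_nonneg_right hw hK, mul_le_mul_of_nonneg_left
        (show K ≤ (1 + K) ^ 2 by nlinarith) (sq_nonneg δ)]
    exact (lintegral_sq_enorm_tsum_ite_le hS hAL hI).trans (ENNReal.ofReal_mul_le_of_le_ofReal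
      (by positivity) hN (by nlinarith [mul_le_mul_of_nonneg_left hwK (sq_nonneg (Cf * Cg * M))]))
  · have hwK : 1 + 4 / (2 * Real.pi / δ) ^ 2 * K ≤ (1 + K) ^ 2 := by
      nlinarith [mul_le_mul_of_nonneg_right (hw.trans hδ2) hK]
    exact (lintegral_sq_enorm_tsum_le hS hAL hI).trans (ENNReal.ofReal_mul_le_of_le_ofReal
      (by positivity) hN (by nlinarith [mul_le_mul_of_nonneg_left hwK (sq_nonneg (Cf * Cg * M))]))
end

section
/- Uniform L² bound for the diagonal lattice sums in the Poisson summation formula. For every ζ_max > 0 there is a constant C > 0, depending only on ζ_max, with the following property: for every Γ in ℍ² and every N ∈ ℕ, ∫₀¹ ∫_{−ζ_max}^{ζ_max} | ∑_{|n| ≤ N} e^{−iζ(x+n)} Γ(x, x+n) |² dζ dx ≤ C ‖Γ‖²_{ℍ²}. -/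
/-!
After pulling out the unimodular phase `e^{-iζx}`, the inner integral is the `L²` norm over
`[-ζmax, ζmax] ⊆ [-Mπ, Mπ]` of the trigonometric polynomial `∑ₙ e^{-iζn} Γ(x, x + n)`; by
orthogonality of the characters `e^{-iζn}` over `M` full periods it is at most
`2Mπ ∑ₙ |Γ(x, x + n)|²`. The one-dimensional Sobolev inequality
`|f(x)|² ≤ ∫₀¹ (2|f|² + |f'|²)` on `[0, 1]` bounds `|Γ(x, X)|²` by a quantity depending on `X`
alone, and since the translates `[n, n + 1]` tile `ℝ`, integrating over `x ∈ [0, 1]` the values at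
`X = x + n` gives at most `∫_ℝ ∫₀¹ (2|Γ|² + |∂ₓΓ|²)`.
-/

open MeasureTheory Filter Set Complex
open scoped ENNReal Real ComplexConjugate InnerProductSpace

theorem integral_exp_neg_I_mul_intCast (M : ℕ) (k : ℤ) :
    ∫ ζ in -(M * π)..M * π, cexp (-(I * ζ * k)) = if k = 0 then ((2 * M * π : ℝ) : ℂ) else 0 := by
  split_ifs with hk
  · simp only [hk, Int.cast_zero, mul_zero, neg_zero, Complex.exp_zero,
      intervalIntegral.integral_const, Complex.real_smul, mul_one]
    push_cast; ring
  have hc : -(I * k) ≠ 0 := by simp [I_ne_zero, hk]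
  simp_rw [show ∀ ζ : ℝ, -(I * ζ * k) = -(I * k) * ζ from fun ζ => by ring]
  rw [integral_exp_mul_complex hc, div_eq_zero_iff, sub_eq_zero]
  left
  have hperiod : -(I * k) * ((M * π : ℝ) : ℂ) = -(I * k) * ((-(M * π) : ℝ) : ℂ)
      + (-(k * M) : ℤ) * (2 * π * I) := by push_cast; ring
  rw [hperiod, Complex.exp_add, exp_int_mul_two_pi_mul_I, mul_one]

theorem integral_norm_sq_sum_exp (M : ℕ) (s : Finset ℤ) (a : ℤ → ℂ) :
    ∫ ζ in -(M * π)..M * π, ‖∑ n ∈ s, cexp (-(I * ζ * n)) * a n‖ ^ 2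
      = 2 * M * π * ∑ n ∈ s, ‖a n‖ ^ 2 := by
  have hexpand : ∀ ζ : ℝ, ((‖∑ n ∈ s, cexp (-(I * ζ * n)) * a n‖ ^ 2 : ℝ) : ℂ)
      = ∑ m ∈ s, ∑ n ∈ s, a m * conj (a n) * cexp (-(I * ζ * ((m - n : ℤ) : ℂ))) := by
    intro ζ
    rw [ofReal_pow, ← mul_conj', map_sum, Finset.sum_mul_sum]
    refine Finset.sum_congr rfl fun m _ => Finset.sum_congr rfl fun n _ => ?_
    rw [map_mul, ← Complex.exp_conj, mul_mul_mul_comm, ← Complex.exp_add, mul_comm (cexp _)]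
    congr 2
    simp only [map_neg, map_mul, conj_I, conj_ofReal, map_intCast]
    push_cast; ring
  have hint : ∀ (c : ℂ) (k : ℤ), IntervalIntegrable (fun ζ : ℝ => c * cexp (-(I * ζ * k)))
      volume (-(M * π)) (M * π) := fun c k => by
    apply Continuous.intervalIntegrable; fun_prop
  apply ofReal_injective
  rw [← intervalIntegral.integral_ofReal, intervalIntegral.integral_congr fun ζ _ => hexpand ζ,
    intervalIntegral.integral_finsetSum fun m _ =>
      (continuous_finsetSum _ fun n _ => by fun_prop).intervalIntegrable _ _]
  simp_rw [intervalIntegral.integral_finsetSum fun n _ => hint _ _,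
    intervalIntegral.integral_const_mul, integral_exp_neg_I_mul_intCast, sub_eq_zero,
    mul_ite, mul_zero, Finset.sum_ite_eq, mul_conj']
  push_cast
  rw [Finset.mul_sum]
  refine Finset.sum_congr rfl fun n hn => ?_
  rw [if_pos hn, mul_comm]

theorem norm_sum_exp_shift_eq (ζ x : ℝ) (s : Finset ℤ) (a : ℤ → ℂ) :
    ‖∑ n ∈ s, cexp (-(I * ζ * ((x + n : ℝ) : ℂ))) * a n‖
      = ‖∑ n ∈ s, cexp (-(I * ζ * n)) * a n‖ := by
  have hphase : ∑ n ∈ s, cexp (-(I * ζ * ((x + n : ℝ) : ℂ))) * a n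
      = cexp ((-(ζ * x) : ℝ) * I) * ∑ n ∈ s, cexp (-(I * ζ * n)) * a n := by
    rw [Finset.mul_sum]
    refine Finset.sum_congr rfl fun n _ => ?_
    rw [← mul_assoc, ← Complex.exp_add]
    push_cast; ring_nf
  rw [hphase, norm_mul, norm_exp_ofReal_mul_I, one_mul]

theorem lintegral_Icc_enorm_sq_sum_exp_le (M : ℕ) {T : ℝ} (hT : T ≤ M * π) (x : ℝ)
    (s : Finset ℤ) (a : ℤ → ℂ) :
    ∫⁻ ζ in Icc (-T) T, ‖∑ n ∈ s, cexp (-(I * ζ * ((x + n : ℝ) : ℂ))) * a n‖ₑ ^ 2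
      ≤ ENNReal.ofReal (2 * M * π) * ∑ n ∈ s, ‖a n‖ₑ ^ 2 := by
  have hMπ : -(M * π) ≤ M * π := neg_le_self (by positivity)
  have hcont : Continuous fun ζ : ℝ => ‖∑ n ∈ s, cexp (-(I * ζ * n)) * a n‖ ^ 2 := by fun_prop
  calc ∫⁻ ζ in Icc (-T) T, ‖∑ n ∈ s, cexp (-(I * ζ * ((x + n : ℝ) : ℂ))) * a n‖ₑ ^ 2
      ≤ ∫⁻ ζ in Icc (-(M * π)) (M * π),
          ENNReal.ofReal (‖∑ n ∈ s, cexp (-(I * ζ * n)) * a n‖ ^ 2) := by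
        refine (lintegral_mono_set (Icc_subset_Icc (neg_le_neg hT) hT)).trans_eq ?_
        refine lintegral_congr fun ζ => ?_
        rw [ENNReal.ofReal_pow (norm_nonneg _), ← norm_sum_exp_shift_eq ζ x, ofReal_norm]
    _ = ENNReal.ofReal (2 * M * π) * ∑ n ∈ s, ‖a n‖ₑ ^ 2 := by
        rw [← ofReal_integral_eq_lintegral_ofReal hcont.integrableOn_Icc
          (Eventually.of_forall fun ζ => by positivity), integral_Icc_eq_integral_Ioc,
          ← intervalIntegral.integral_of_le hMπ, integral_norm_sq_sum_exp,
          ENNReal.ofReal_mul (by positivity), ENNReal.ofReal_sum_of_nonneg fun n _ => by positivity]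
        simp only [ENNReal.ofReal_pow (norm_nonneg _), ofReal_norm]

theorem lintegral_Icc_sum_intCast_add_le {g : ℝ → ℝ≥0∞} (hg : AEMeasurable g) (s : Finset ℤ) :
    ∫⁻ x in Icc (0:ℝ) 1, ∑ n ∈ s, g (x + n) ≤ ∫⁻ X, g X := by
  have hshift : ∀ n : ℤ, ∫⁻ x in Ico (0:ℝ) 1, g (x + n) = ∫⁻ X in Ico (n:ℝ) (n + 1), g X :=
    fun n => by
      have := (measurePreserving_add_right volume (n:ℝ)).setLIntegral_comp_preimage_emb
        (measurableEmbedding_addRight _) g (Ico (n:ℝ) (n + 1))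
      rwa [preimage_add_const_Ico, sub_self, add_sub_cancel_left] at this
  calc ∫⁻ x in Icc (0:ℝ) 1, ∑ n ∈ s, g (x + n)
      = ∑ n ∈ s, ∫⁻ x in Ico (0:ℝ) 1, g (x + n) := by
        rw [← Measure.restrict_congr_set Ico_ae_eq_Icc]
        exact lintegral_finsetSum' _ fun n _ => (hg.comp_quasiMeasurePreserving
          (measurePreserving_add_right volume (n:ℝ)).quasiMeasurePreserving).restrict
    _ = ∫⁻ X in ⋃ n ∈ s, Ico (n:ℝ) (n + 1), g X := by
        rw [lintegral_biUnion_finset ((pairwise_disjoint_Ico_intCast ℝ).set_pairwise _)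
          (fun _ _ => measurableSet_Ico)]
        exact Finset.sum_congr rfl fun n _ => hshift n
    _ ≤ ∫⁻ X, g X := setLIntegral_le_lintegral _ _

section

variable {F : Type*} [NormedAddCommGroup F] [InnerProductSpace ℝ F]

theorem sq_norm_le_setIntegral_Icc_of_contDiff {f : ℝ → F} (hf : ContDiff ℝ 1 f) {x : ℝ}
    (hx : x ∈ Icc (0:ℝ) 1) :
    ‖f x‖ ^ 2 ≤ ∫ t in Icc (0:ℝ) 1, (2 * ‖f t‖ ^ 2 + ‖deriv f t‖ ^ 2) := by
  have hfc : Continuous f := hf.continuous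
  have hf'c : Continuous (deriv f) := hf.continuous_deriv le_rfl
  have hderiv : ∀ t, HasDerivAt (‖f ·‖ ^ 2) (2 * ⟪f t, deriv f t⟫_ℝ) t := fun t =>
    ((hf.differentiable one_ne_zero) t).hasDerivAt.norm_sq
  have hderiv_le : ∀ t, |2 * ⟪f t, deriv f t⟫_ℝ| ≤ ‖f t‖ ^ 2 + ‖deriv f t‖ ^ 2 := fun t => by
    rw [abs_mul, abs_two]
    linarith [mul_le_mul_of_nonneg_left (abs_real_inner_le_norm (f t) (deriv f t)) zero_le_two,
      two_mul_le_add_sq ‖f t‖ ‖deriv f t‖]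
  have hint : ∀ g : ℝ → ℝ, Continuous g → IntegrableOn g (Icc (0:ℝ) 1) := fun g hg =>
    hg.integrableOn_Icc
  set D := ∫ t in Icc (0:ℝ) 1, (‖f t‖ ^ 2 + ‖deriv f t‖ ^ 2) with hD
  have hosc : ∀ y ∈ Icc (0:ℝ) 1, ‖f x‖ ^ 2 ≤ ‖f y‖ ^ 2 + D := fun y hy => by
    have hftc : ‖f x‖ ^ 2 - ‖f y‖ ^ 2 = ∫ t in y..x, 2 * ⟪f t, deriv f t⟫_ℝ :=
      (intervalIntegral.integral_eq_sub_of_hasDerivAt (fun t _ => hderiv t)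
        (Continuous.intervalIntegrable (by fun_prop) _ _)).symm
    have huIoc : uIoc y x ⊆ Icc (0:ℝ) 1 :=
      uIoc_subset_uIcc.trans (uIcc_subset_Icc hy hx)
    have hincrement : ∫ t in y..x, 2 * ⟪f t, deriv f t⟫_ℝ ≤ D := calc
      _ ≤ ∫ t in uIoc y x, ‖2 * ⟪f t, deriv f t⟫_ℝ‖ :=
          (Real.le_norm_self _).trans (intervalIntegral.norm_integral_le_integral_norm_uIoc)
      _ ≤ ∫ t in Icc (0:ℝ) 1, ‖2 * ⟪f t, deriv f t⟫_ℝ‖ :=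
          setIntegral_mono_set (hint _ (by fun_prop)) (Eventually.of_forall fun _ => norm_nonneg _)
            huIoc.eventuallyLE
      _ ≤ D := setIntegral_mono (hint _ (by fun_prop)) (hint _ (by fun_prop)) hderiv_le
    linarith
  calc ‖f x‖ ^ 2 = ∫ _ in Icc (0:ℝ) 1, ‖f x‖ ^ 2 := by simp
    _ ≤ ∫ y in Icc (0:ℝ) 1, (‖f y‖ ^ 2 + D) :=
        setIntegral_mono_on (hint _ continuous_const) (hint _ (by fun_prop)) measurableSet_Icc hosc
    _ = (∫ t in Icc (0:ℝ) 1, ‖f t‖ ^ 2) + D := by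
        rw [integral_add (hint _ (by fun_prop)) (hint _ continuous_const), setIntegral_const,
          Real.volume_real_Icc_of_le zero_le_one, sub_zero, one_smul]
    _ = ∫ t in Icc (0:ℝ) 1, (2 * ‖f t‖ ^ 2 + ‖deriv f t‖ ^ 2) := by
        rw [hD, ← integral_add (hint _ (by fun_prop)) (hint _ (by fun_prop))]
        congr 1 with t
        ring

theorem enorm_sq_le_lintegral_Icc_of_contDiff {f : ℝ → F} (hf : ContDiff ℝ 1 f) {x : ℝ}
    (hx : x ∈ Icc (0:ℝ) 1) :
    ‖f x‖ₑ ^ 2 ≤ ∫⁻ t in Icc (0:ℝ) 1, ENNReal.ofReal (2 * ‖f t‖ ^ 2 + ‖deriv f t‖ ^ 2) := by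
  have hcont : Continuous fun t => 2 * ‖f t‖ ^ 2 + ‖deriv f t‖ ^ 2 := by
    have hfc : Continuous f := hf.continuous
    have hf'c : Continuous (deriv f) := hf.continuous_deriv le_rfl
    fun_prop
  rw [← ofReal_integral_eq_lintegral_ofReal hcont.integrableOn_Icc
      (Eventually.of_forall fun t => by positivity), ← ofReal_norm,
    ← ENNReal.ofReal_pow (norm_nonneg _)]
  exact ENNReal.ofReal_le_ofReal (sq_norm_le_setIntegral_Icc_of_contDiff hf hx)

theorem lintegral_Icc_sum_enorm_sq_diag_le {Γ : ℝ → ℝ → F}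
    (hΓ : ∀ X, ContDiff ℝ 1 fun x => Γ x X)
    (hint₀ : Integrable (fun p : ℝ × ℝ => ‖Γ p.1 p.2‖ ^ 2)
      ((volume.restrict (Icc (0:ℝ) 1)).prod volume))
    (hint₁ : Integrable (fun p : ℝ × ℝ => ‖deriv (fun y => Γ y p.2) p.1‖ ^ 2)
      ((volume.restrict (Icc (0:ℝ) 1)).prod volume))
    (s : Finset ℤ) :
    ∫⁻ x in Icc (0:ℝ) 1, ∑ n ∈ s, ‖Γ x (x + n)‖ₑ ^ 2
      ≤ ENNReal.ofReal (2 * (∫ x in Icc (0:ℝ) 1, ∫ X, ‖Γ x X‖ ^ 2)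
          + ∫ x in Icc (0:ℝ) 1, ∫ X, ‖deriv (fun y => Γ y X) x‖ ^ 2) := by
  set h : ℝ × ℝ → ℝ := fun p => 2 * ‖Γ p.1 p.2‖ ^ 2 + ‖deriv (fun y => Γ y p.2) p.1‖ ^ 2
  have hh : Integrable h ((volume.restrict (Icc (0:ℝ) 1)).prod volume) :=
    (hint₀.const_mul 2).add hint₁
  set H : ℝ → ℝ≥0∞ := fun X => ∫⁻ t in Icc (0:ℝ) 1, ENNReal.ofReal (h (t, X))
  have hH : ∫⁻ X, H X = ENNReal.ofReal (2 * (∫ x in Icc (0:ℝ) 1, ∫ X, ‖Γ x X‖ ^ 2)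
      + ∫ x in Icc (0:ℝ) 1, ∫ X, ‖deriv (fun y => Γ y X) x‖ ^ 2) := by
    rw [← lintegral_prod_symm _ hh.aemeasurable.ennreal_ofReal,
      ← ofReal_integral_eq_lintegral_ofReal hh (Eventually.of_forall fun p => by positivity),
      integral_add (hint₀.const_mul 2) hint₁, integral_const_mul, integral_prod _ hint₀,
      integral_prod _ hint₁]
  calc ∫⁻ x in Icc (0:ℝ) 1, ∑ n ∈ s, ‖Γ x (x + n)‖ₑ ^ 2
      ≤ ∫⁻ x in Icc (0:ℝ) 1, ∑ n ∈ s, H (x + n) :=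
        setLIntegral_mono' measurableSet_Icc fun x hx =>
          Finset.sum_le_sum fun n _ => enorm_sq_le_lintegral_Icc_of_contDiff (hΓ _) hx
    _ ≤ ∫⁻ X, H X :=
        lintegral_Icc_sum_intCast_add_le hh.aemeasurable.ennreal_ofReal.lintegral_prod_left' s
    _ = _ := hH

end

theorem diagonal_lattice_sum_L2_bound_general (ζmax : ℝ) :
    ∃ C > (0:ℝ), ∀ Γ : ℝ → ℝ → ℂ,
      (Continuous fun p : ℝ × ℝ => Γ p.1 p.2) →
      (∀ x X : ℝ, Γ (x + 1) X = Γ x X) →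
      (∀ X : ℝ, ContDiff ℝ 2 fun x => Γ x X) →
      (∀ j : ℕ, j ≤ 2 → Integrable
        (fun p : ℝ × ℝ => ‖iteratedDeriv j (fun y => Γ y p.2) p.1‖ ^ 2)
        ((volume.restrict (Set.Icc (0:ℝ) 1)).prod volume)) →
      ∀ N : ℕ,
        (∫⁻ x in Set.Icc (0:ℝ) 1, ∫⁻ ζ in Set.Icc (-ζmax) ζmax,
          (‖∑ n ∈ Finset.Icc (-(N:ℤ)) (N:ℤ),
              Complex.exp (-(Complex.I * (ζ : ℂ) * ((x + n : ℝ) : ℂ))) * Γ x (x + n)‖₊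
            : ℝ≥0∞) ^ 2)
          ≤ ENNReal.ofReal (C * ∑ j ∈ Finset.range 3,
              ∫ x in Set.Icc (0:ℝ) 1, ∫ X : ℝ, ‖iteratedDeriv j (fun y => Γ y X) x‖ ^ 2) := by
  set M : ℕ := ⌈ζmax / π⌉₊ + 1
  have hM : ζmax ≤ M * π := by
    rw [← div_le_iff₀ Real.pi_pos]
    exact (Nat.le_ceil _).trans (Nat.cast_le.mpr (Nat.le_succ _))
  refine ⟨4 * M * π, by positivity, fun Γ _ _ hΓ hint N => ?_⟩
  set I : ℕ → ℝ := fun j => ∫ x in Icc (0:ℝ) 1, ∫ X, ‖iteratedDeriv j (fun y => Γ y X) x‖ ^ 2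
  have hI : ∀ j, 0 ≤ I j := fun j => integral_nonneg fun x => integral_nonneg fun X => by positivity
  have hdiag := lintegral_Icc_sum_enorm_sq_diag_le (fun X => (hΓ X).of_le one_le_two)
    (by simpa only [iteratedDeriv_zero] using hint 0 (by norm_num))
    (by simpa only [iteratedDeriv_one] using hint 1 (by norm_num)) (Finset.Icc (-(N:ℤ)) N)
  calc _ ≤ ∫⁻ x in Icc (0:ℝ) 1,
        ENNReal.ofReal (2 * M * π) * ∑ n ∈ Finset.Icc (-(N:ℤ)) N, ‖Γ x (x + n)‖ₑ ^ 2 :=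
        lintegral_mono fun x => lintegral_Icc_enorm_sq_sum_exp_le M hM x _ fun n => Γ x (x + n)
    _ ≤ ENNReal.ofReal (2 * M * π) * ENNReal.ofReal (2 * I 0 + I 1) := by
        rw [lintegral_const_mul' _ _ ENNReal.ofReal_ne_top]
        simpa only [I, iteratedDeriv_zero, iteratedDeriv_one] using mul_le_mul_right hdiag _
    _ ≤ _ := by
        rw [← ENNReal.ofReal_mul (by positivity)]
        refine ENNReal.ofReal_le_ofReal ?_
        simp only [Finset.sum_range_succ, Finset.sum_range_zero, zero_add]
        have hMπ : 0 ≤ (M : ℝ) * π := by positivity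
        nlinarith [mul_nonneg hMπ (hI 1), mul_nonneg hMπ (hI 2)]

/-- Uniform L² bound for the diagonal lattice sums in the Poisson summation formula. -/
theorem diagonal_lattice_sum_L2_bound (ζmax : ℝ) (hζmax : 0 < ζmax) :
    ∃ C > (0:ℝ), ∀ Γ : ℝ → ℝ → ℂ,
      (Continuous fun p : ℝ × ℝ => Γ p.1 p.2) →
      (∀ x X : ℝ, Γ (x + 1) X = Γ x X) →
      (∀ X : ℝ, ContDiff ℝ 2 fun x => Γ x X) →
      (∀ j : ℕ, j ≤ 2 → Integrable
        (fun p : ℝ × ℝ => ‖iteratedDeriv j (fun y => Γ y p.2) p.1‖ ^ 2)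
        ((volume.restrict (Set.Icc (0:ℝ) 1)).prod volume)) →
      ∀ N : ℕ,
        (∫⁻ x in Set.Icc (0:ℝ) 1, ∫⁻ ζ in Set.Icc (-ζmax) ζmax,
          (‖∑ n ∈ Finset.Icc (-(N:ℤ)) (N:ℤ),
              Complex.exp (-(Complex.I * (ζ : ℂ) * ((x + n : ℝ) : ℂ))) * Γ x (x + n)‖₊
            : ℝ≥0∞) ^ 2)
          ≤ ENNReal.ofReal (C * ∑ j ∈ Finset.range 3,
              ∫ x in Set.Icc (0:ℝ) 1, ∫ X : ℝ, ‖iteratedDeriv j (fun y => Γ y X) x‖ ^ 2) :=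
  diagonal_lattice_sum_L2_bound_general ζmax
end
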